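/- arXiv:2102.06597 — 4 statements merged into one kernel-verified Lean document; each statement's English description precedes it below -/
import Mathlib

section
/- The constant ϖ* = 32(2m*−1)E(m*)², where m* ∈ (0,1) is the unique parameter with K(m*) = 2E(m*), satisfies ϖ* < 4π²; equivalently, 4ϖ* < 16π². -/
open Real MeasureTheory RealInnerProductSpace

/-- Complete elliptic integral of the first kind. -/
noncomputable def ellK (m : ℝ) : ℝ :=
  ∫ θ in (0:ℝ)..(Real.pi / 2), (Real.sqrt (1 - m * Real.sin θ ^ 2))⁻¹

/-- Complete elliptic integral of the second kind. -/
noncomputable def ellE (m : ℝ) : ℝ :=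
  ∫ θ in (0:ℝ)..(Real.pi / 2), Real.sqrt (1 - m * Real.sin θ ^ 2)

lemma sqrt_one_sub_le (x : ℝ) (h0 : 0 ≤ x) (h1 : x ≤ 1) :
    Real.sqrt (1 - x) ≤ 1 - x/2 - x^2/8 := by
  have ha : 0 ≤ 1 - x/2 - x^2/8 := by nlinarith
  have h : 1 - x ≤ (1 - x/2 - x^2/8)^2 := by nlinarith [pow_le_pow_left₀ h0 h1 3, pow_le_pow_left₀ h0 h1 4]
  calc Real.sqrt (1 - x) ≤ Real.sqrt ((1 - x/2 - x^2/8)^2) := Real.sqrt_le_sqrt h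
    _ = 1 - x/2 - x^2/8 := Real.sqrt_sq ha

lemma ellE_nonneg (m : ℝ) : 0 ≤ ellE m := by
  apply intervalIntegral.integral_nonneg (by positivity)
  intro x _; exact Real.sqrt_nonneg _

lemma ellE_le (m : ℝ) (hm : m ∈ Set.Ioo (0:ℝ) 1) :
    ellE m ≤ Real.pi/2 * (1 - m/4 - 3*m^2/64) := by
  obtain ⟨hm0, hm1⟩ := hm
  have hmono : ellE m ≤ ∫ θ in (0:ℝ)..(Real.pi/2),
      (1 - m/2 * Real.sin θ ^ 2 - m^2/8 * Real.sin θ ^ 4) := by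
    apply intervalIntegral.integral_mono_on (by positivity)
    · apply Continuous.intervalIntegrable
      exact (continuous_const.sub (continuous_const.mul ((Real.continuous_sin).pow 2))).sqrt
    · apply Continuous.intervalIntegrable; fun_prop
    · intro θ _
      have hs0 : 0 ≤ m * Real.sin θ ^ 2 := by positivity
      have hs1 : m * Real.sin θ ^ 2 ≤ 1 := by
        nlinarith [Real.sin_sq_le_one θ, sq_nonneg (Real.sin θ)]
      have := sqrt_one_sub_le (m * Real.sin θ ^ 2) hs0 hs1
      calc Real.sqrt (1 - m * Real.sin θ ^ 2)
          ≤ 1 - (m * Real.sin θ ^ 2)/2 - (m * Real.sin θ ^ 2)^2/8 := this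
        _ = 1 - m/2 * Real.sin θ ^ 2 - m^2/8 * Real.sin θ ^ 4 := by ring
  have h2 : ∫ x in (0:ℝ)..(Real.pi/2), Real.sin x ^ 2 = Real.pi / 4 := by
    simp [integral_sin_sq]; ring
  have h4 : ∫ x in (0:ℝ)..(Real.pi/2), Real.sin x ^ 4 = 3 * Real.pi / 16 := by
    rw [show (4:ℕ) = 2 + 2 from rfl, integral_sin_pow]
    simp [integral_sin_sq]; ring
  have hi2 : IntervalIntegrable (fun x => Real.sin x ^ 2) volume 0 (Real.pi/2) := by
    apply Continuous.intervalIntegrable; fun_prop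
  have hi4 : IntervalIntegrable (fun x => Real.sin x ^ 4) volume 0 (Real.pi/2) := by
    apply Continuous.intervalIntegrable; fun_prop
  have hsplit : (∫ θ in (0:ℝ)..(Real.pi/2),
      (1 - m/2 * Real.sin θ ^ 2 - m^2/8 * Real.sin θ ^ 4))
      = Real.pi/2 - m/2 * (Real.pi/4) - m^2/8 * (3 * Real.pi/16) := by
    rw [intervalIntegral.integral_sub, intervalIntegral.integral_sub]
    · rw [intervalIntegral.integral_const, intervalIntegral.integral_const_mul,
        intervalIntegral.integral_const_mul, h2, h4]
      simp
    · apply Continuous.intervalIntegrable; fun_prop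
    · exact hi2.const_mul _
    · apply Continuous.intervalIntegrable; fun_prop
    · exact hi4.const_mul _
  rw [hsplit] at hmono
  calc ellE m ≤ Real.pi/2 - m/2 * (Real.pi/4) - m^2/8 * (3 * Real.pi/16) := hmono
    _ = Real.pi/2 * (1 - m/4 - 3*m^2/64) := by ring

/-- `ϖ* < 4π²`; equivalently `4ϖ* < 16π²`. -/
theorem pw_lt_four_pi_sq (m : ℝ) (hm : m ∈ Set.Ioo (0:ℝ) 1) (hKE : ellK m = 2 * ellE m) :
    (32 * (2 * m - 1) * ellE m ^ 2) < 4 * Real.pi ^ 2 ∧ 4 * (32 * (2 * m - 1) * ellE m ^ 2) < 16 * Real.pi ^ 2 := by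
  obtain ⟨hm0, hm1⟩ := hm
  have hpi := Real.pi_pos
  have key : 32 * (2 * m - 1) * ellE m ^ 2 < 4 * Real.pi ^ 2 := by
    rcases le_or_gt (2 * m - 1) 0 with h | h
    · have hE2 : 0 ≤ ellE m ^ 2 := sq_nonneg _
      nlinarith
    · have hE := ellE_le m ⟨hm0, hm1⟩
      have hEn := ellE_nonneg m
      have hc : 0 ≤ 1 - m/4 - 3*m^2/64 := by nlinarith
      have hsq : ellE m ^ 2 ≤ (Real.pi/2 * (1 - m/4 - 3*m^2/64))^2 :=
        pow_le_pow_left₀ hEn hE 2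
      have hpoly : (2*m-1) * (1 - m/4 - 3*m^2/64)^2 < 1/2 := by
        nlinarith [sq_nonneg (1-m), sq_nonneg m, sq_nonneg (m*(1-m)),
          sq_nonneg (m^2*(1-m)), mul_pos hm0 (sub_pos.2 hm1)]
      have hpi2 : 0 < Real.pi ^ 2 := by positivity
      nlinarith [mul_le_mul_of_nonneg_left hsq (le_of_lt (by linarith : (0:ℝ) < 32 * (2*m-1)))]
  exact ⟨key, by linarith⟩
end

section
/- Set h(m) = E(m) − (1−m)K(m) for m ∈ (0,1). Then both functions m ↦ E(m)·h(m) and m ↦ K(m)·h(m) are strictly increasing on (0,1). Consequently, m ↦ (2E(m) + K(m))·(E(m) − (1−m)K(m)) is strictly increasing on (0,1). -/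
open Real MeasureTheory RealInnerProductSpace intervalIntegral Set Metric

namespace EllAux

lemma A_pos' {x : ℝ} {b : ℝ} (hb0 : 0 ≤ b) (hb1 : b < 1) (hxb : x ≤ b) (θ : ℝ) :
    0 < 1 - b ∧ 1 - b ≤ 1 - x * Real.sin θ ^ 2 := by
  constructor
  · linarith
  · rcases le_or_gt x 0 with h | h
    · nlinarith [sq_nonneg (Real.sin θ), Real.sin_sq_le_one θ]
    · nlinarith [Real.sin_sq_le_one θ, sq_nonneg (Real.sin θ)]

lemma A_pos {x : ℝ} (hx : x < 1) (θ : ℝ) : 0 < 1 - x * Real.sin θ ^ 2 := by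
  rcases le_or_gt x 0 with h | h
  · nlinarith [sq_nonneg (Real.sin θ), Real.sin_sq_le_one θ]
  · nlinarith [Real.sin_sq_le_one θ, sq_nonneg (Real.sin θ)]

lemma sqrtA_pos {x : ℝ} (hx : x < 1) (θ : ℝ) : 0 < Real.sqrt (1 - x * Real.sin θ ^ 2) :=
  Real.sqrt_pos.mpr (A_pos hx θ)

lemma contSqrtA (x : ℝ) : Continuous fun θ : ℝ => Real.sqrt (1 - x * Real.sin θ ^ 2) := by
  fun_prop

lemma contInvSqrtA {x : ℝ} (hx : x < 1) :
    Continuous fun θ : ℝ => (Real.sqrt (1 - x * Real.sin θ ^ 2))⁻¹ :=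
  (contSqrtA x).inv₀ fun θ => (sqrtA_pos hx θ).ne'

lemma contInvSqrtA3 {x : ℝ} (hx : x < 1) :
    Continuous fun θ : ℝ => (Real.sqrt (1 - x * Real.sin θ ^ 2) ^ 3)⁻¹ :=
  ((contSqrtA x).pow 3).inv₀ fun θ => pow_ne_zero 3 (sqrtA_pos hx θ).ne'

lemma hdA_sqrt (s : ℝ) {x : ℝ} (hx : 0 < 1 - x * s ^ 2) :
    HasDerivAt (fun y : ℝ => Real.sqrt (1 - y * s ^ 2))
      (-(s ^ 2) / (2 * Real.sqrt (1 - x * s ^ 2))) x := by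
  have hinner : HasDerivAt (fun y : ℝ => 1 - y * s ^ 2) (-(s ^ 2)) x := by
    simpa using ((hasDerivAt_id x).mul_const (s ^ 2)).const_sub 1
  have h := (Real.hasDerivAt_sqrt hx.ne').comp x hinner
  refine h.congr_deriv ?_
  ring

lemma hdA_inv (s : ℝ) {x : ℝ} (hx : 0 < 1 - x * s ^ 2) :
    HasDerivAt (fun y : ℝ => (Real.sqrt (1 - y * s ^ 2))⁻¹)
      (s ^ 2 / (2 * Real.sqrt (1 - x * s ^ 2) ^ 3)) x := by
  have hs := hdA_sqrt s hx
  have hpos := Real.sqrt_pos.mpr hx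
  have h := hs.inv hpos.ne'
  refine h.congr_deriv ?_
  have h2 : Real.sqrt (1 - x * s ^ 2) ^ 2 = 1 - x * s ^ 2 := Real.sq_sqrt hx.le
  field_simp

lemma hasDerivAt_ellE {m : ℝ} (hm : m ∈ Set.Ioo (0:ℝ) 1) :
    HasDerivAt ellE ((ellE m - ellK m) / (2 * m)) m := by
  obtain ⟨hm0, hm1⟩ := hm
  set b : ℝ := (1 + m) / 2 with hbdef
  have hb0 : 0 ≤ b := by positivity
  have hb1 : b < 1 := by simp only [hbdef]; linarith
  have hbm : m < b := by simp only [hbdef]; linarith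
  have hsb : 0 < Real.sqrt (1 - b) := Real.sqrt_pos.mpr (by linarith)
  have hball : ∀ x ∈ ball m (b - m), ∀ θ : ℝ, 0 < 1 - x * Real.sin θ ^ 2 ∧
      Real.sqrt (1 - b) ≤ Real.sqrt (1 - x * Real.sin θ ^ 2) := by
    intro x hx θ
    have hxb : x ≤ b := by
      have := abs_lt.mp (mem_ball_iff_norm.mp hx); linarith [this.2]
    obtain ⟨h1b, h2b⟩ := A_pos' hb0 hb1 hxb θ
    exact ⟨lt_of_lt_of_le h1b h2b, Real.sqrt_le_sqrt h2b⟩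
  have hbound : ∀ θ : ℝ, θ ∈ Set.uIoc (0:ℝ) (Real.pi/2) → ∀ x ∈ ball m (b - m),
      ‖-(Real.sin θ ^ 2) / (2 * Real.sqrt (1 - x * Real.sin θ ^ 2))‖ ≤ (2 * Real.sqrt (1 - b))⁻¹ := by
    intro θ _ x hx
    obtain ⟨hApos, hsq⟩ := hball x hx θ
    have hspos : 0 < Real.sqrt (1 - x * Real.sin θ ^ 2) := Real.sqrt_pos.mpr hApos
    rw [norm_div, norm_neg, norm_pow, Real.norm_eq_abs, Real.norm_eq_abs,
      abs_of_pos (by positivity : (0:ℝ) < 2 * Real.sqrt (1 - x * Real.sin θ ^ 2)),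
      div_le_iff₀ (by positivity), inv_mul_eq_div, le_div_iff₀ (by positivity)]
    nlinarith [Real.sin_sq_le_one θ, sq_abs (Real.sin θ), abs_nonneg (Real.sin θ), hsq, hsb]
  have hdiff : ∀ θ : ℝ, θ ∈ Set.uIoc (0:ℝ) (Real.pi/2) → ∀ x ∈ ball m (b - m),
      HasDerivAt (fun y => Real.sqrt (1 - y * Real.sin θ ^ 2))
        (-(Real.sin θ ^ 2) / (2 * Real.sqrt (1 - x * Real.sin θ ^ 2))) x := by
    intro θ _ x hx
    exact hdA_sqrt _ (hball x hx θ).1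
  have hmeas' : AEStronglyMeasurable
      (fun θ => -(Real.sin θ ^ 2) / (2 * Real.sqrt (1 - m * Real.sin θ ^ 2)))
      (volume.restrict (Set.uIoc (0:ℝ) (Real.pi/2))) := by
    apply Continuous.aestronglyMeasurable
    apply Continuous.div (by fun_prop) (by fun_prop)
    intro θ
    have := sqrtA_pos hm1 θ; positivity
  have key := intervalIntegral.hasDerivAt_integral_of_dominated_loc_of_deriv_le
    (μ := volume) (F := fun x θ => Real.sqrt (1 - x * Real.sin θ ^ 2))
    (F' := fun x θ => -(Real.sin θ ^ 2) / (2 * Real.sqrt (1 - x * Real.sin θ ^ 2)))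
    (x₀ := m) (a := 0) (b := Real.pi / 2)
    (bound := fun _ => (2 * Real.sqrt (1 - b))⁻¹) (s := ball m (b - m))
    (ball_mem_nhds m (by linarith))
    (Filter.Eventually.of_forall fun x => ((contSqrtA x).aestronglyMeasurable))
    ((contSqrtA m).intervalIntegrable _ _)
    hmeas'
    (Filter.Eventually.of_forall hbound)
    intervalIntegrable_const
    (Filter.Eventually.of_forall hdiff)
  have hED : HasDerivAt ellE
      (∫ θ in (0:ℝ)..(Real.pi/2), -(Real.sin θ ^ 2) / (2 * Real.sqrt (1 - m * Real.sin θ ^ 2))) m := key.2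
  convert hED using 1
  rw [show (∫ θ in (0:ℝ)..(Real.pi/2), -(Real.sin θ ^ 2) / (2 * Real.sqrt (1 - m * Real.sin θ ^ 2)))
      = ∫ θ in (0:ℝ)..(Real.pi/2), (Real.sqrt (1 - m * Real.sin θ ^ 2) - (Real.sqrt (1 - m * Real.sin θ ^ 2))⁻¹) / (2 * m) from
    intervalIntegral.integral_congr fun θ _ => by
      have hA := A_pos hm1 θ
      have hs := sqrtA_pos hm1 θ
      have h2 : Real.sqrt (1 - m * Real.sin θ ^ 2) ^ 2 = 1 - m * Real.sin θ ^ 2 :=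
        Real.sq_sqrt hA.le
      have hinv : Real.sqrt (1 - m * Real.sin θ ^ 2)
          * (Real.sqrt (1 - m * Real.sin θ ^ 2))⁻¹ = 1 := mul_inv_cancel₀ hs.ne'
      rw [div_eq_div_iff (mul_pos two_pos hs).ne' (mul_pos two_pos hm0).ne']
      linear_combination (-2) * h2 + 2 * hinv]
  rw [intervalIntegral.integral_div,
    intervalIntegral.integral_sub ((contSqrtA m).intervalIntegrable _ _)
      ((contInvSqrtA hm1).intervalIntegrable _ _)]
  rfl

lemma hasDerivAt_boundary {m x : ℝ} (hm1 : m < 1) (hm0 : m ≠ 0) :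
    HasDerivAt (fun θ : ℝ => Real.sin θ * Real.cos θ * (Real.sqrt (1 - m * Real.sin θ ^ 2))⁻¹)
      ((1/m) * Real.sqrt (1 - m * Real.sin x ^ 2)
        - ((1-m)/m) * (Real.sqrt (1 - m * Real.sin x ^ 2) ^ 3)⁻¹) x := by
  have hA : 0 < 1 - m * Real.sin x ^ 2 := A_pos hm1 x
  have hsA : 0 < Real.sqrt (1 - m * Real.sin x ^ 2) := Real.sqrt_pos.mpr hA
  have hsq : HasDerivAt (fun θ : ℝ => Real.sin θ ^ 2) (2 * Real.sin x ^ 1 * Real.cos x) x :=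
    (Real.hasDerivAt_sin x).pow 2
  have hAθ : HasDerivAt (fun θ : ℝ => 1 - m * Real.sin θ ^ 2)
      (-(m * (2 * Real.sin x ^ 1 * Real.cos x))) x := (hsq.const_mul m).const_sub 1
  have hsqrt := (Real.hasDerivAt_sqrt hA.ne').comp x hAθ
  have hinv := hsqrt.inv hsA.ne'
  have hsc : HasDerivAt (fun θ : ℝ => Real.sin θ * Real.cos θ)
      (Real.cos x * Real.cos x + Real.sin x * -Real.sin x) x :=
    (Real.hasDerivAt_sin x).mul (Real.hasDerivAt_cos x)
  have hF := hsc.mul hinv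
  refine hF.congr_deriv ?_
  have h2 : Real.sqrt (1 - m * Real.sin x ^ 2) ^ 2 = 1 - m * Real.sin x ^ 2 := Real.sq_sqrt hA.le
  have hc : Real.sin x ^ 2 + Real.cos x ^ 2 = 1 := Real.sin_sq_add_cos_sq x
  simp only [Pi.inv_apply, Function.comp_apply]
  field_simp
  set S := Real.sqrt (1 - m * Real.sin x ^ 2) with hS
  set s := Real.sin x with hs
  set c := Real.cos x with hcc
  set A := 1 - m * s ^ 2 with hAdef
  congr 1
  rw [mul_comm (s ^ 2) m]
  rw [hS, hAdef] at h2
  linear_combination (m*(c^2-s^2) - (1 - m*s^2) - Real.sqrt (1 - m*s^2) ^ 2) * h2 + m * hc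

lemma integral_I3 {m : ℝ} (hm : m ∈ Set.Ioo (0:ℝ) 1) :
    ∫ θ in (0:ℝ)..(Real.pi/2), (Real.sqrt (1 - m * Real.sin θ ^ 2) ^ 3)⁻¹
      = ellE m / (1 - m) := by
  obtain ⟨hm0, hm1⟩ := hm
  have hint1 : IntervalIntegrable (fun θ => Real.sqrt (1 - m * Real.sin θ ^ 2)) volume 0 (Real.pi/2) :=
    (contSqrtA m).intervalIntegrable _ _
  have hint3 : IntervalIntegrable (fun θ => (Real.sqrt (1 - m * Real.sin θ ^ 2) ^ 3)⁻¹) volume 0 (Real.pi/2) :=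
    (contInvSqrtA3 hm1).intervalIntegrable _ _
  have hG : IntervalIntegrable
      (fun θ => (1/m) * Real.sqrt (1 - m * Real.sin θ ^ 2)
        - ((1-m)/m) * (Real.sqrt (1 - m * Real.sin θ ^ 2) ^ 3)⁻¹) volume 0 (Real.pi/2) :=
    (hint1.const_mul _).sub (hint3.const_mul _)
  have h0 := intervalIntegral.integral_eq_sub_of_hasDerivAt
    (f := fun θ : ℝ => Real.sin θ * Real.cos θ * (Real.sqrt (1 - m * Real.sin θ ^ 2))⁻¹)
    (f' := fun θ => (1/m) * Real.sqrt (1 - m * Real.sin θ ^ 2)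
        - ((1-m)/m) * (Real.sqrt (1 - m * Real.sin θ ^ 2) ^ 3)⁻¹)
    (fun θ _ => hasDerivAt_boundary hm1 hm0.ne') hG
  rw [intervalIntegral.integral_sub (hint1.const_mul _) (hint3.const_mul _),
    intervalIntegral.integral_const_mul, intervalIntegral.integral_const_mul] at h0
  simp only [Real.sin_pi_div_two, Real.cos_pi_div_two, Real.sin_zero, mul_zero, zero_mul,
    one_mul, sub_zero] at h0
  have hE : (∫ θ in (0:ℝ)..(Real.pi/2), Real.sqrt (1 - m * Real.sin θ ^ 2)) = ellE m := rfl
  rw [hE] at h0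
  have h1m : (1:ℝ) - m ≠ 0 := by linarith
  field_simp at h0 ⊢
  linarith

lemma hasDerivAt_ellK {m : ℝ} (hm : m ∈ Set.Ioo (0:ℝ) 1) :
    HasDerivAt ellK ((ellE m / (1 - m) - ellK m) / (2 * m)) m := by
  obtain ⟨hm0, hm1⟩ := hm
  set b : ℝ := (1 + m) / 2 with hbdef
  have hb0 : 0 ≤ b := by positivity
  have hb1 : b < 1 := by simp only [hbdef]; linarith
  have hbm : m < b := by simp only [hbdef]; linarith
  have hsb : 0 < Real.sqrt (1 - b) := Real.sqrt_pos.mpr (by linarith)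
  have hball : ∀ x ∈ ball m (b - m), ∀ θ : ℝ, 0 < 1 - x * Real.sin θ ^ 2 ∧
      Real.sqrt (1 - b) ≤ Real.sqrt (1 - x * Real.sin θ ^ 2) := by
    intro x hx θ
    have hxb : x ≤ b := by
      have := abs_lt.mp (mem_ball_iff_norm.mp hx); linarith [this.2]
    obtain ⟨h1b, h2b⟩ := A_pos' hb0 hb1 hxb θ
    exact ⟨lt_of_lt_of_le h1b h2b, Real.sqrt_le_sqrt h2b⟩
  have hbound : ∀ θ : ℝ, θ ∈ Set.uIoc (0:ℝ) (Real.pi/2) → ∀ x ∈ ball m (b - m),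
      ‖Real.sin θ ^ 2 / (2 * Real.sqrt (1 - x * Real.sin θ ^ 2) ^ 3)‖
        ≤ (2 * Real.sqrt (1 - b) ^ 3)⁻¹ := by
    intro θ _ x hx
    obtain ⟨hApos, hsq⟩ := hball x hx θ
    have hspos : 0 < Real.sqrt (1 - x * Real.sin θ ^ 2) := Real.sqrt_pos.mpr hApos
    have hcube : Real.sqrt (1 - b) ^ 3 ≤ Real.sqrt (1 - x * Real.sin θ ^ 2) ^ 3 :=
      pow_le_pow_left₀ hsb.le hsq 3
    rw [norm_div, norm_pow, Real.norm_eq_abs, Real.norm_eq_abs,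
      abs_of_pos (by positivity : (0:ℝ) < 2 * Real.sqrt (1 - x * Real.sin θ ^ 2) ^ 3),
      div_le_iff₀ (by positivity), inv_mul_eq_div, le_div_iff₀ (by positivity)]
    nlinarith [Real.sin_sq_le_one θ, sq_abs (Real.sin θ), abs_nonneg (Real.sin θ), hcube, hsb,
      pow_pos hsb 3]
  have hdiff : ∀ θ : ℝ, θ ∈ Set.uIoc (0:ℝ) (Real.pi/2) → ∀ x ∈ ball m (b - m),
      HasDerivAt (fun y => (Real.sqrt (1 - y * Real.sin θ ^ 2))⁻¹)
        (Real.sin θ ^ 2 / (2 * Real.sqrt (1 - x * Real.sin θ ^ 2) ^ 3)) x := by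
    intro θ _ x hx
    exact hdA_inv _ (hball x hx θ).1
  have hmeas' : AEStronglyMeasurable
      (fun θ => Real.sin θ ^ 2 / (2 * Real.sqrt (1 - m * Real.sin θ ^ 2) ^ 3))
      (volume.restrict (Set.uIoc (0:ℝ) (Real.pi/2))) := by
    apply Continuous.aestronglyMeasurable
    apply Continuous.div (by fun_prop) (by fun_prop)
    intro θ
    have := sqrtA_pos hm1 θ; positivity
  have hmeasF : ∀ x : ℝ, AEStronglyMeasurable
      (fun θ => (Real.sqrt (1 - x * Real.sin θ ^ 2))⁻¹)
      (volume.restrict (Set.uIoc (0:ℝ) (Real.pi/2))) := by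
    intro x
    apply Measurable.aestronglyMeasurable
    apply Measurable.inv
    exact (Real.continuous_sqrt.comp (by fun_prop)).measurable
  have key := intervalIntegral.hasDerivAt_integral_of_dominated_loc_of_deriv_le
    (μ := volume) (F := fun x θ => (Real.sqrt (1 - x * Real.sin θ ^ 2))⁻¹)
    (F' := fun x θ => Real.sin θ ^ 2 / (2 * Real.sqrt (1 - x * Real.sin θ ^ 2) ^ 3))
    (x₀ := m) (a := 0) (b := Real.pi / 2)
    (bound := fun _ => (2 * Real.sqrt (1 - b) ^ 3)⁻¹) (s := ball m (b - m))
    (ball_mem_nhds m (by linarith))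
    (Filter.Eventually.of_forall hmeasF)
    ((contInvSqrtA hm1).intervalIntegrable _ _)
    hmeas'
    (Filter.Eventually.of_forall hbound)
    intervalIntegrable_const
    (Filter.Eventually.of_forall hdiff)
  have hKD : HasDerivAt ellK
      (∫ θ in (0:ℝ)..(Real.pi/2), Real.sin θ ^ 2 / (2 * Real.sqrt (1 - m * Real.sin θ ^ 2) ^ 3)) m := key.2
  convert hKD using 1
  rw [show (∫ θ in (0:ℝ)..(Real.pi/2), Real.sin θ ^ 2 / (2 * Real.sqrt (1 - m * Real.sin θ ^ 2) ^ 3))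
      = ∫ θ in (0:ℝ)..(Real.pi/2), ((Real.sqrt (1 - m * Real.sin θ ^ 2) ^ 3)⁻¹
          - (Real.sqrt (1 - m * Real.sin θ ^ 2))⁻¹) / (2 * m) from
    intervalIntegral.integral_congr fun θ _ => by
      have hA := A_pos hm1 θ
      have hs := sqrtA_pos hm1 θ
      have h2 : Real.sqrt (1 - m * Real.sin θ ^ 2) ^ 2 = 1 - m * Real.sin θ ^ 2 :=
        Real.sq_sqrt hA.le
      have hinv : Real.sqrt (1 - m * Real.sin θ ^ 2)
          * (Real.sqrt (1 - m * Real.sin θ ^ 2))⁻¹ = 1 := mul_inv_cancel₀ hs.ne'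
      have hinv3 : Real.sqrt (1 - m * Real.sin θ ^ 2) ^ 3
          * (Real.sqrt (1 - m * Real.sin θ ^ 2) ^ 3)⁻¹ = 1 := mul_inv_cancel₀ (pow_pos hs 3).ne'
      rw [div_eq_div_iff (mul_pos two_pos (pow_pos hs 3)).ne' (mul_pos two_pos hm0).ne']
      linear_combination 2 * h2 + (-2) * hinv3
        + 2 * Real.sqrt (1 - m * Real.sin θ ^ 2) ^ 2 * hinv]
  rw [intervalIntegral.integral_div,
    intervalIntegral.integral_sub ((contInvSqrtA3 hm1).intervalIntegrable _ _)
      ((contInvSqrtA hm1).intervalIntegrable _ _),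
    integral_I3 ⟨hm0, hm1⟩]
  rfl

lemma ellK_pos {m : ℝ} (hm : m ∈ Set.Ioo (0:ℝ) 1) : 0 < ellK m := by
  apply intervalIntegral.intervalIntegral_pos_of_pos_on
    ((contInvSqrtA hm.2).intervalIntegrable _ _)
  · intro x _
    have := sqrtA_pos hm.2 x
    positivity
  · linarith [Real.pi_pos]

lemma ellE_pos {m : ℝ} (hm : m ∈ Set.Ioo (0:ℝ) 1) : 0 < ellE m := by
  apply intervalIntegral.intervalIntegral_pos_of_pos_on
    ((contSqrtA m).intervalIntegrable _ _)
  · intro x _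
    exact sqrtA_pos hm.2 x
  · linarith [Real.pi_pos]

lemma sin_sq_lt_one {θ : ℝ} (hθ : θ ∈ Set.Ioo (0:ℝ) (Real.pi/2)) : Real.sin θ ^ 2 < 1 := by
  have hcos : 0 < Real.cos θ := Real.cos_pos_of_mem_Ioo
    ⟨by linarith [hθ.1, Real.pi_pos], hθ.2⟩
  nlinarith [Real.sin_sq_add_cos_sq θ]

lemma E_lt_K {m : ℝ} (hm : m ∈ Set.Ioo (0:ℝ) 1) : ellE m < ellK m := by
  rw [← sub_pos, show ellK m - ellE m
      = ∫ θ in (0:ℝ)..(Real.pi/2), ((Real.sqrt (1 - m * Real.sin θ ^ 2))⁻¹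
          - Real.sqrt (1 - m * Real.sin θ ^ 2)) from
    (intervalIntegral.integral_sub ((contInvSqrtA hm.2).intervalIntegrable _ _)
      ((contSqrtA m).intervalIntegrable _ _)).symm]
  apply intervalIntegral.intervalIntegral_pos_of_pos_on
    (((contInvSqrtA hm.2).sub (contSqrtA m)).intervalIntegrable _ _)
  · intro θ hθ
    have hsin : 0 < Real.sin θ := Real.sin_pos_of_pos_of_lt_pi hθ.1
      (by linarith [hθ.2, Real.pi_pos])
    have hA := A_pos hm.2 θ
    have hA1 : 1 - m * Real.sin θ ^ 2 < 1 := by nlinarith [mul_pos hm.1 (pow_pos hsin 2)]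
    have hs := sqrtA_pos hm.2 θ
    have h2 := Real.sq_sqrt hA.le
    have hinv : Real.sqrt (1 - m * Real.sin θ ^ 2)
        * (Real.sqrt (1 - m * Real.sin θ ^ 2))⁻¹ = 1 := mul_inv_cancel₀ hs.ne'
    simp only [Pi.sub_apply]
    nlinarith [hinv, h2, hs, hA1]
  · linarith [Real.pi_pos]

lemma h_pos {m : ℝ} (hm : m ∈ Set.Ioo (0:ℝ) 1) : 0 < ellE m - (1 - m) * ellK m := by
  rw [show ellE m - (1 - m) * ellK m
      = ∫ θ in (0:ℝ)..(Real.pi/2), (Real.sqrt (1 - m * Real.sin θ ^ 2)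
          - (1 - m) * (Real.sqrt (1 - m * Real.sin θ ^ 2))⁻¹) from ?_]
  · apply intervalIntegral.intervalIntegral_pos_of_pos_on
      (((contSqrtA m).sub (continuous_const.mul (contInvSqrtA hm.2))).intervalIntegrable _ _)
    · intro θ hθ
      have hs2 : Real.sin θ ^ 2 < 1 := sin_sq_lt_one hθ
      have hA := A_pos hm.2 θ
      have hgt : 1 - m < 1 - m * Real.sin θ ^ 2 := by nlinarith [hm.1]
      have hs := sqrtA_pos hm.2 θ
      have h2 := Real.sq_sqrt hA.le
      have hinv : Real.sqrt (1 - m * Real.sin θ ^ 2)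
          * (Real.sqrt (1 - m * Real.sin θ ^ 2))⁻¹ = 1 := mul_inv_cancel₀ hs.ne'
      simp only [Pi.sub_apply, Pi.mul_apply]
      nlinarith [hinv, h2, hs, hgt, hm.2]
    · linarith [Real.pi_pos]
  · rw [intervalIntegral.integral_sub ((contSqrtA m).intervalIntegrable _ _)
      (((contInvSqrtA hm.2).intervalIntegrable _ _).const_mul _),
      intervalIntegral.integral_const_mul]
    rfl

lemma hasDerivAt_h {m : ℝ} (hm : m ∈ Set.Ioo (0:ℝ) 1) :
    HasDerivAt (fun x => ellE x - (1 - x) * ellK x) (ellK m / 2) m := by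
  have hE := hasDerivAt_ellE hm
  have hK := hasDerivAt_ellK hm
  have hone : HasDerivAt (fun x : ℝ => 1 - x) (-1) m := by
    simpa using (hasDerivAt_id m).const_sub 1
  have hprod := hone.mul hK
  have := hE.sub hprod
  refine this.congr_deriv ?_
  have hm0 := hm.1
  have hm1 := hm.2
  have h1m : (1:ℝ) - m ≠ 0 := by linarith
  field_simp
  ring

lemma hasDerivAt_f1 {m : ℝ} (hm : m ∈ Set.Ioo (0:ℝ) 1) :
    HasDerivAt (fun x => ellE x * (ellE x - (1 - x) * ellK x))
      ((ellE m - ellK m) / (2 * m) * (ellE m - (1 - m) * ellK m)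
        + ellE m * (ellK m / 2)) m :=
  (hasDerivAt_ellE hm).mul (hasDerivAt_h hm)

lemma hasDerivAt_f2 {m : ℝ} (hm : m ∈ Set.Ioo (0:ℝ) 1) :
    HasDerivAt (fun x => ellK x * (ellE x - (1 - x) * ellK x))
      ((ellE m / (1 - m) - ellK m) / (2 * m) * (ellE m - (1 - m) * ellK m)
        + ellK m * (ellK m / 2)) m :=
  (hasDerivAt_ellK hm).mul (hasDerivAt_h hm)

lemma f1_deriv_pos {m : ℝ} (hm : m ∈ Set.Ioo (0:ℝ) 1) :
    0 < (ellE m - ellK m) / (2 * m) * (ellE m - (1 - m) * ellK m)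
        + ellE m * (ellK m / 2) := by
  obtain ⟨hm0, hm1⟩ := hm
  have hE := ellE_pos ⟨hm0, hm1⟩
  have hK := ellK_pos ⟨hm0, hm1⟩
  have hEK := E_lt_K ⟨hm0, hm1⟩
  have hh := h_pos ⟨hm0, hm1⟩
  have hhE : ellE m - (1 - m) * ellK m < ellE m := by nlinarith
  have key2 : (ellE m - ellK m) / (2 * m) * (ellE m - (1 - m) * ellK m)
        + ellE m * (ellK m / 2)
      = (ellE m * (ellE m - (1 - m) * ellK m)
          + (ellK m - ellE m) * (ellE m - (ellE m - (1 - m) * ellK m))) / (2 * m) := by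
    field_simp
    ring
  rw [key2]
  apply div_pos _ (by linarith)
  have t1 : 0 < ellE m * (ellE m - (1 - m) * ellK m) := mul_pos hE hh
  have t2 : 0 < (ellK m - ellE m) * (ellE m - (ellE m - (1 - m) * ellK m)) :=
    mul_pos (by linarith) (by linarith)
  linarith

lemma f2_deriv_pos {m : ℝ} (hm : m ∈ Set.Ioo (0:ℝ) 1) :
    0 < (ellE m / (1 - m) - ellK m) / (2 * m) * (ellE m - (1 - m) * ellK m)
        + ellK m * (ellK m / 2) := by
  obtain ⟨hm0, hm1⟩ := hm
  have hK := ellK_pos ⟨hm0, hm1⟩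
  have hh := h_pos ⟨hm0, hm1⟩
  have h1m : (0:ℝ) < 1 - m := by linarith
  have key2 : (ellE m / (1 - m) - ellK m) / (2 * m) * (ellE m - (1 - m) * ellK m)
        + ellK m * (ellK m / 2)
      = (ellE m - (1 - m) * ellK m) ^ 2 / (2 * m * (1 - m)) + ellK m ^ 2 / 2 := by
    field_simp
  rw [key2]
  have : 0 < (ellE m - (1 - m) * ellK m) ^ 2 / (2 * m * (1 - m)) := by positivity
  nlinarith [hK]

end EllAux

/-- Monotonicity of `E·h`, `K·h` and `(2E+K)·h` with `h = E - (1-m)K` on `(0,1)`. -/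
theorem elliptic_monotonicity :
    StrictMonoOn (fun m => ellE m * (ellE m - (1 - m) * ellK m)) (Set.Ioo (0:ℝ) 1) ∧
    StrictMonoOn (fun m => ellK m * (ellE m - (1 - m) * ellK m)) (Set.Ioo (0:ℝ) 1) ∧
    StrictMonoOn (fun m => (2 * ellE m + ellK m) * (ellE m - (1 - m) * ellK m))
      (Set.Ioo (0:ℝ) 1) := by
  have sm1 : StrictMonoOn (fun m => ellE m * (ellE m - (1 - m) * ellK m)) (Set.Ioo (0:ℝ) 1) := by
    apply strictMonoOn_of_deriv_pos (convex_Ioo 0 1)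
    · intro x hx
      exact (EllAux.hasDerivAt_f1 hx).continuousAt.continuousWithinAt
    · intro x hx
      rw [interior_Ioo] at hx
      rw [(EllAux.hasDerivAt_f1 hx).deriv]
      exact EllAux.f1_deriv_pos hx
  have sm2 : StrictMonoOn (fun m => ellK m * (ellE m - (1 - m) * ellK m)) (Set.Ioo (0:ℝ) 1) := by
    apply strictMonoOn_of_deriv_pos (convex_Ioo 0 1)
    · intro x hx
      exact (EllAux.hasDerivAt_f2 hx).continuousAt.continuousWithinAt
    · intro x hx
      rw [interior_Ioo] at hx
      rw [(EllAux.hasDerivAt_f2 hx).deriv]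
      exact EllAux.f2_deriv_pos hx
  refine ⟨sm1, sm2, ?_⟩
  intro x hx y hy hxy
  have h1 := sm1 hx hy hxy
  have h2 := sm2 hx hy hxy
  simp only at h1 h2 ⊢
  nlinarith [h1, h2]
end

section
/- Let n ≥ 2 and N ≥ 1, and let γ₁, …, γ_N be immersed unit-speed curves, γⱼ : [0, Lⱼ] → ℝⁿ, of class W^{2,1} (γⱼ continuously differentiable with ‖γⱼ'‖ ≡ 1, γⱼ' absolutely continuous, and ∫₀^{Lⱼ} ‖γⱼ''‖ ds < ∞), forming a closed loop: γⱼ(Lⱼ) = γ_{j+1}(0) for all j, with indices taken modulo N. For each j let θⱼ ∈ [0, π] be the external angle at the vertex, defined by cos θⱼ = ⟨γⱼ'(Lⱼ), γ_{j+1}'(0)⟩. Then Σ_{j=1}^N ∫₀^{Lⱼ} ‖γⱼ''(s)‖ ds ≥ 2π − Σ_{j=1}^N θⱼ. -/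
open Real MeasureTheory RealInnerProductSpace

/-- A unit-speed `W^{2,1}`-curve of length `L` in `ℝⁿ`. -/
structure W21Curve (n : ℕ) (L : ℝ) where
  f : ℝ → EuclideanSpace ℝ (Fin n)
  d1 : ℝ → EuclideanSpace ℝ (Fin n)
  d2 : ℝ → EuclideanSpace ℝ (Fin n)
  posL : 0 < L
  hderiv : ∀ s ∈ Set.Icc (0:ℝ) L, HasDerivWithinAt f (d1 s) (Set.Icc (0:ℝ) L) s
  hcont : ContinuousOn d1 (Set.Icc (0:ℝ) L)
  hunit : ∀ s ∈ Set.Icc (0:ℝ) L, ‖d1 s‖ = 1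
  hAC : ∀ s ∈ Set.Icc (0:ℝ) L, d1 s = d1 0 + ∫ t in (0:ℝ)..s, d2 t
  hint : IntegrableOn d2 (Set.Icc (0:ℝ) L)

section Sphere
variable {F : Type*} [NormedAddCommGroup F] [InnerProductSpace ℝ F]

lemma my_arccos_le_arccos {x y : ℝ} (h : x ≤ y) : Real.arccos y ≤ Real.arccos x := by
  rw [Real.arccos_eq_pi_div_two_sub_arcsin, Real.arccos_eq_pi_div_two_sub_arcsin]
  linarith [Real.monotone_arcsin h]

lemma inner_unit_mem {x y : F} (hx : ‖x‖ = 1) (hy : ‖y‖ = 1) :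
    ⟪x, y⟫ ∈ Set.Icc (-1 : ℝ) 1 := by
  have h := abs_real_inner_le_norm x y
  rw [hx, hy] at h
  rw [abs_le] at h
  simpa using h

lemma arccos_inner_eq {x y : F} (hx : ‖x‖ = 1) (hy : ‖y‖ = 1) :
    Real.arccos ⟪x, y⟫ = 2 * Real.arcsin (‖x - y‖ / 2) := by
  set s := ‖x - y‖ / 2 with hs
  have hs0 : 0 ≤ s := by positivity
  have hs1 : s ≤ 1 := by
    have : ‖x - y‖ ≤ 2 := by
      calc ‖x - y‖ ≤ ‖x‖ + ‖y‖ := norm_sub_le x y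
      _ = 2 := by rw [hx, hy]; norm_num
    simp only [hs]; linarith
  have hns : ‖x - y‖ ^ 2 = 2 - 2 * ⟪x, y⟫ := by
    rw [norm_sub_sq_real, hx, hy]; ring
  have h1 : ⟪x, y⟫ = 1 - 2 * s ^ 2 := by
    have : s ^ 2 = ‖x - y‖ ^ 2 / 4 := by rw [hs]; ring
    rw [this, hns]; ring
  have hsin : Real.sin (Real.arcsin s) = s := Real.sin_arcsin (by linarith) hs1
  have h2 : Real.cos (2 * Real.arcsin s) = 1 - 2 * s ^ 2 := by
    have := Real.cos_sq_add_sin_sq (Real.arcsin s)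
    rw [Real.cos_two_mul', hsin]
    nlinarith
  have h3 : 0 ≤ 2 * Real.arcsin s := by
    have := Real.arcsin_nonneg.2 hs0; linarith
  have h4 : 2 * Real.arcsin s ≤ π := by
    have := Real.arcsin_le_pi_div_two s; linarith
  rw [h1, ← h2, Real.arccos_cos h3 h4]

lemma arcsin_le_div_sqrt {s d : ℝ} (hs0 : 0 ≤ s) (hsd : s ≤ d / 2) (hd1 : d ≤ 1) :
    Real.arcsin s ≤ s / Real.sqrt (1 - (d / 2) ^ 2) := by
  have hd2 : (d/2)^2 ≤ (1/2:ℝ)^2 := by nlinarith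
  have hpos : (0:ℝ) < 1 - (d/2)^2 := by nlinarith
  have hsqpos : 0 < Real.sqrt (1 - (d/2)^2) := Real.sqrt_pos.2 hpos
  rcases eq_or_lt_of_le hs0 with h0 | h0
  · simp [← h0]
  · have hs1 : s < 1 := by nlinarith
    have ht0 : 0 < Real.arcsin s := Real.arcsin_pos.2 h0
    have htlt : Real.arcsin s < π / 2 := (Real.arcsin_lt_pi_div_two).2 hs1
    have htan := Real.lt_tan ht0 htlt
    rw [Real.tan_eq_sin_div_cos, Real.sin_arcsin (by linarith) hs1.le,
      Real.cos_arcsin] at htan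
    have hmono : Real.sqrt (1 - (d/2)^2) ≤ Real.sqrt (1 - s^2) :=
      Real.sqrt_le_sqrt (by nlinarith)
    have hpos2 : 0 < Real.sqrt (1 - s^2) := Real.sqrt_pos.2 (by nlinarith)
    calc Real.arcsin s ≤ s / Real.sqrt (1 - s ^ 2) := htan.le
    _ ≤ s / Real.sqrt (1 - (d/2)^2) := by
        exact div_le_div_of_nonneg_left hs0 hsqpos hmono
  
/-- small-chord angle bound -/
lemma arccos_inner_le_of_chord {x y : F} (hx : ‖x‖ = 1) (hy : ‖y‖ = 1) {d : ℝ}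
    (hd1 : d ≤ 1) (hc : ‖x - y‖ ≤ d) :
    Real.arccos ⟪x, y⟫ ≤ (Real.sqrt (1 - (d / 2) ^ 2))⁻¹ * ‖x - y‖ := by
  rw [arccos_inner_eq hx hy]
  have h := arcsin_le_div_sqrt (s := ‖x - y‖ / 2) (by positivity) (by linarith) hd1
  have he : ‖x - y‖ / 2 / Real.sqrt (1 - (d / 2) ^ 2)
      = (Real.sqrt (1 - (d / 2) ^ 2))⁻¹ * ‖x - y‖ / 2 := by ring
  rw [he] at h
  linarith

lemma arccos_inner_triangle {x y z : F} (hx : ‖x‖ = 1) (hy : ‖y‖ = 1) (hz : ‖z‖ = 1) :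
    Real.arccos ⟪x, z⟫ ≤ Real.arccos ⟪x, y⟫ + Real.arccos ⟪y, z⟫ := by
  set α := Real.arccos ⟪x, y⟫ with hα
  set β := Real.arccos ⟪y, z⟫ with hβ
  have hα0 : 0 ≤ α := Real.arccos_nonneg _
  have hβ0 : 0 ≤ β := Real.arccos_nonneg _
  by_cases hπ : π ≤ α + β
  · exact le_trans (Real.arccos_le_pi _) hπ
  push_neg at hπ
  have hxy := inner_unit_mem hx hy
  have hyz := inner_unit_mem hy hz
  have hcα : Real.cos α = ⟪x, y⟫ := Real.cos_arccos hxy.1 hxy.2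
  have hcβ : Real.cos β = ⟪y, z⟫ := Real.cos_arccos hyz.1 hyz.2
  have hsα : Real.sin α = Real.sqrt (1 - ⟪x, y⟫ ^ 2) := Real.sin_arccos _
  have hsβ : Real.sin β = Real.sqrt (1 - ⟪y, z⟫ ^ 2) := Real.sin_arccos _
  set x' := x - Real.cos α • y with hx'
  set z' := z - Real.cos β • y with hz'
  have hyy : ⟪y, y⟫ = (1:ℝ) := by rw [real_inner_self_eq_norm_sq, hy]; norm_num
  have hnx' : ‖x'‖ = Real.sin α := by
    have h1 : ‖x'‖ ^ 2 = 1 - ⟪x, y⟫ ^ 2 := by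
      rw [hx', ← real_inner_self_eq_norm_sq]
      simp only [inner_sub_left, inner_sub_right, real_inner_smul_left, real_inner_smul_right,
        hyy, hcα, real_inner_comm y x]
      rw [real_inner_self_eq_norm_sq, hx]
      ring
    rw [hsα, ← h1]
    exact (Real.sqrt_sq (norm_nonneg _)).symm
  have hnz' : ‖z'‖ = Real.sin β := by
    have h1 : ‖z'‖ ^ 2 = 1 - ⟪y, z⟫ ^ 2 := by
      rw [hz', ← real_inner_self_eq_norm_sq]
      simp only [inner_sub_left, inner_sub_right, real_inner_smul_left, real_inner_smul_right,
        hyy, hcβ, real_inner_comm z y]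
      rw [real_inner_self_eq_norm_sq, hz]
      ring
    rw [hsβ, ← h1]
    exact (Real.sqrt_sq (norm_nonneg _)).symm
  have hinner : ⟪x', z'⟫ = ⟪x, z⟫ - Real.cos α * Real.cos β := by
    simp only [hx', hz', inner_sub_left, inner_sub_right, real_inner_smul_left,
      real_inner_smul_right, hyy, hcα, hcβ, real_inner_comm z y, real_inner_comm y x]
    ring
  have hCS : |⟪x', z'⟫| ≤ Real.sin α * Real.sin β := by
    calc |⟪x', z'⟫| ≤ ‖x'‖ * ‖z'‖ := abs_real_inner_le_norm x' z'
    _ = Real.sin α * Real.sin β := by rw [hnx', hnz']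
  have hkey : Real.cos (α + β) ≤ ⟪x, z⟫ := by
    rw [Real.cos_add]
    have := abs_le.1 hCS
    nlinarith [this.1]
  calc Real.arccos ⟪x, z⟫ ≤ Real.arccos (Real.cos (α + β)) := my_arccos_le_arccos hkey
  _ = α + β := Real.arccos_cos (by linarith) (by linarith)

end Sphere
section SPath
variable {F : Type*} [NormedAddCommGroup F] [InnerProductSpace ℝ F]

/-- A "spherical path with length gauge". -/
structure SPath (F : Type*) [NormedAddCommGroup F] [InnerProductSpace ℝ F] where
  T : ℝ → F
  len : ℝ → ℝ
  D : ℝ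
  hD : 0 ≤ D
  contT : Continuous T
  contLen : Continuous len
  monoLen : Monotone len
  unit : ∀ t, ‖T t‖ = 1
  len0 : ∀ t ≤ (0:ℝ), len t = 0
  lenD : ∀ t, D ≤ t → len t = len D
  T0 : ∀ t ≤ (0:ℝ), T t = T 0
  TD : ∀ t, D ≤ t → T t = T D
  lip : ∀ a b, a ≤ b → Real.arccos ⟪T a, T b⟫ ≤ len b - len a

namespace SPath

lemma len_nonneg (P : SPath F) (t : ℝ) : 0 ≤ P.len t := by
  rcases le_total t 0 with h | h
  · rw [P.len0 t h]
  · rw [← P.len0 0 le_rfl]; exact P.monoLen h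

lemma inner_self_one (P : SPath F) (t : ℝ) : ⟪P.T t, P.T t⟫ = (1:ℝ) := by
  rw [real_inner_self_eq_norm_sq, P.unit]; norm_num

/-- constant path -/
noncomputable def const (x : F) (hx : ‖x‖ = 1) : SPath F where
  T _ := x
  len _ := 0
  D := 0
  hD := le_rfl
  contT := continuous_const
  contLen := continuous_const
  monoLen := monotone_const
  unit _ := hx
  len0 _ _ := rfl
  lenD _ _ := rfl
  T0 _ _ := rfl
  TD _ _ := rfl
  lip a b _ := by
    have : ⟪x, x⟫ = (1:ℝ) := by rw [real_inner_self_eq_norm_sq, hx]; norm_num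
    rw [this, Real.arccos_one]; norm_num

/-- concatenation -/
noncomputable def trans (P Q : SPath F) (h : P.T P.D = Q.T 0) : SPath F where
  T t := if t ≤ P.D then P.T t else Q.T (t - P.D)
  len t := if t ≤ P.D then P.len t else P.len P.D + Q.len (t - P.D)
  D := P.D + Q.D
  hD := add_nonneg P.hD Q.hD
  contT := by
    refine Continuous.if_le P.contT (Q.contT.comp (continuous_id.sub continuous_const))
      continuous_id continuous_const (fun t ht => ?_)
    simp only [Function.comp_apply, ht, sub_self]
    exact h
  contLen := by
    refine Continuous.if_le P.contLen
      (continuous_const.add (Q.contLen.comp (continuous_id.sub continuous_const)))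
      continuous_id continuous_const (fun t ht => ?_)
    simp only [Function.comp_apply, ht, sub_self, Q.len0 0 le_rfl, add_zero]
  monoLen := by
    intro a b hab
    by_cases ha : a ≤ P.D <;> by_cases hb : b ≤ P.D
    · simp only [if_pos ha, if_pos hb]; exact P.monoLen hab
    · simp only [if_pos ha, if_neg hb]
      calc P.len a ≤ P.len P.D := P.monoLen ha
      _ ≤ P.len P.D + Q.len (b - P.D) := le_add_of_nonneg_right (Q.len_nonneg _)
    · exact absurd (hab.trans hb) ha
    · simp only [if_neg ha, if_neg hb]
      exact add_le_add (le_refl _) (Q.monoLen (sub_le_sub_right hab _))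
  unit t := by split <;> apply_rules [P.unit, Q.unit]
  len0 t ht := by
    rw [if_pos (ht.trans P.hD), P.len0 t ht]
  lenD := by
    have key : ∀ t, P.D + Q.D ≤ t →
        (if t ≤ P.D then P.len t else P.len P.D + Q.len (t - P.D))
          = P.len P.D + Q.len Q.D := by
      intro t ht
      by_cases h1 : t ≤ P.D
      · have hQ0 : Q.D = 0 := le_antisymm (by linarith) Q.hD
        have htD : t = P.D := le_antisymm h1 (by linarith)
        rw [if_pos h1, htD, hQ0, Q.len0 0 le_rfl, add_zero]
      · rw [if_neg h1]
        congr 1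
        exact Q.lenD _ (by linarith)
    intro t ht
    rw [key t ht, key (P.D + Q.D) le_rfl]
  T0 t ht := by
    rw [if_pos (ht.trans P.hD), if_pos P.hD, P.T0 t ht]
  TD := by
    have key : ∀ t, P.D + Q.D ≤ t →
        (if t ≤ P.D then P.T t else Q.T (t - P.D)) = Q.T Q.D := by
      intro t ht
      by_cases h1 : t ≤ P.D
      · have hQ0 : Q.D = 0 := le_antisymm (by linarith) Q.hD
        have htD : t = P.D := le_antisymm h1 (by linarith)
        rw [if_pos h1, htD, h, hQ0, Q.T0 0 le_rfl]
      · rw [if_neg h1]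
        apply Q.TD _ (by linarith)
    intro t ht
    rw [key t ht, key (P.D + Q.D) le_rfl]
  lip := by
    intro a b hab
    by_cases ha : a ≤ P.D <;> by_cases hb : b ≤ P.D
    · simp only [if_pos ha, if_pos hb]
      exact P.lip a b hab
    · simp only [if_pos ha, if_neg hb]
      have tri := arccos_inner_triangle (x := P.T a) (y := P.T P.D) (z := Q.T (b - P.D))
        (P.unit a) (P.unit P.D) (Q.unit _)
      have h1 := P.lip a P.D ha
      have h2 := Q.lip 0 (b - P.D) (by linarith)
      rw [Q.len0 0 le_rfl] at h2
      rw [h] at tri h1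
      linarith
    · exact absurd (hab.trans hb) ha
    · simp only [if_neg ha, if_neg hb]
      have := Q.lip (a - P.D) (b - P.D) (sub_le_sub_right hab _)
      linarith
  
lemma trans_T_start (P Q : SPath F) (h : P.T P.D = Q.T 0) : (P.trans Q h).T 0 = P.T 0 := by
  simp only [trans, if_pos P.hD]

lemma trans_T_end (P Q : SPath F) (h : P.T P.D = Q.T 0) :
    (P.trans Q h).T (P.trans Q h).D = Q.T Q.D := by
  show (if P.D + Q.D ≤ P.D then P.T (P.D + Q.D) else Q.T (P.D + Q.D - P.D)) = Q.T Q.D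
  by_cases h1 : P.D + Q.D ≤ P.D
  · have hQ0 : Q.D = 0 := le_antisymm (by linarith [Q.hD]) Q.hD
    rw [if_pos h1, hQ0, add_zero, h, Q.T0 0 le_rfl]
  · rw [if_neg h1, add_sub_cancel_left]

lemma trans_len_end (P Q : SPath F) (h : P.T P.D = Q.T 0) :
    (P.trans Q h).len (P.trans Q h).D = P.len P.D + Q.len Q.D := by
  show (if P.D + Q.D ≤ P.D then P.len (P.D + Q.D)
      else P.len P.D + Q.len (P.D + Q.D - P.D)) = P.len P.D + Q.len Q.D
  by_cases h1 : P.D + Q.D ≤ P.D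
  · have hQ0 : Q.D = 0 := le_antisymm (by linarith [Q.hD]) Q.hD
    rw [if_pos h1, hQ0, add_zero, Q.len0 0 le_rfl, add_zero]
  · rw [if_neg h1, add_sub_cancel_left]

lemma trans_mem_left (P Q : SPath F) (h : P.T P.D = Q.T 0) (t : ℝ) :
    ∃ u, (P.trans Q h).T u = P.T t := by
  refine ⟨min t P.D, ?_⟩
  show (if min t P.D ≤ P.D then P.T (min t P.D) else _) = _
  rw [if_pos (min_le_right _ _)]
  rcases le_total t P.D with h1 | h1
  · rw [min_eq_left h1]
  · rw [min_eq_right h1, P.TD t h1]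

lemma trans_mem_right (P Q : SPath F) (h : P.T P.D = Q.T 0) (t : ℝ) :
    ∃ u, (P.trans Q h).T u = Q.T t := by
  refine ⟨P.D + max t 0, ?_⟩
  show (if P.D + max t 0 ≤ P.D then P.T (P.D + max t 0) else Q.T (P.D + max t 0 - P.D)) = _
  rcases le_or_gt t 0 with h1 | h1
  · rw [max_eq_right h1, add_zero, if_pos le_rfl, h, Q.T0 t h1]
  · rw [if_neg (by rw [max_eq_left h1.le]; linarith), add_sub_cancel_left,
      max_eq_left h1.le]

end SPath
end SPath
section Arc
variable {F : Type*} [NormedAddCommGroup F] [InnerProductSpace ℝ F]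

/-- clamp to `[0, d]` -/
noncomputable def clampI (d t : ℝ) : ℝ := max 0 (min t d)

lemma clampI_nonneg (d t : ℝ) : 0 ≤ clampI d t := le_max_left _ _
lemma clampI_le (d t : ℝ) (hd : 0 ≤ d) : clampI d t ≤ d :=
  max_le hd (min_le_right _ _)
lemma clampI_mono (d : ℝ) : Monotone (clampI d) :=
  fun _ _ h => max_le_max le_rfl (min_le_min_right _ h)
lemma clampI_continuous (d : ℝ) : Continuous (clampI d) :=
  continuous_const.max (continuous_id.min continuous_const)
lemma clampI_of_nonpos (d : ℝ) {t : ℝ} (ht : t ≤ 0) (hd : 0 ≤ d) : clampI d t = 0 := by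
  rw [clampI, min_eq_left (ht.trans hd), max_eq_left ht]
lemma clampI_of_ge (d : ℝ) {t : ℝ} (ht : d ≤ t) (hd : 0 ≤ d) : clampI d t = d := by
  rw [clampI, min_eq_right ht, max_eq_right hd]
lemma clampI_of_mem (d : ℝ) {t : ℝ} (h0 : 0 ≤ t) (hd : t ≤ d) : clampI d t = t := by
  rw [clampI, min_eq_left hd, max_eq_right h0]
lemma clampI_mem (d t : ℝ) (hd : 0 ≤ d) : clampI d t ∈ Set.Icc 0 d :=
  ⟨clampI_nonneg d t, clampI_le d t hd⟩

/-- great-circle arc from `x` in direction `w`, running for time `θ`. -/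
noncomputable def SPath.arc (x w : F) (θ : ℝ) (hx : ‖x‖ = 1) (hw : ‖w‖ = 1)
    (hxw : ⟪x, w⟫ = 0) (hθ0 : 0 ≤ θ) (hθπ : θ ≤ Real.pi) : SPath F where
  T t := Real.cos (clampI θ t) • x + Real.sin (clampI θ t) • w
  len t := clampI θ t
  D := θ
  hD := hθ0
  contT := by
    have hc := clampI_continuous θ
    exact ((Real.continuous_cos.comp hc).smul continuous_const).add
      ((Real.continuous_sin.comp hc).smul continuous_const)
  contLen := clampI_continuous θ
  monoLen := clampI_mono θ
  unit := by
    intro t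
    set a := clampI θ t
    have hwx : ⟪w, x⟫ = (0:ℝ) := by rw [real_inner_comm]; exact hxw
    have hxx : ⟪x, x⟫ = (1:ℝ) := by rw [real_inner_self_eq_norm_sq, hx]; norm_num
    have hww : ⟪w, w⟫ = (1:ℝ) := by rw [real_inner_self_eq_norm_sq, hw]; norm_num
    have h2 : ‖Real.cos a • x + Real.sin a • w‖ ^ 2 = 1 := by
      rw [← real_inner_self_eq_norm_sq]
      simp only [inner_add_left, inner_add_right, real_inner_smul_left, real_inner_smul_right,
        hxx, hww, hxw, hwx]
      have := Real.sin_sq_add_cos_sq a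
      nlinarith
    nlinarith [norm_nonneg (Real.cos a • x + Real.sin a • w), h2]
  len0 t ht := clampI_of_nonpos θ ht hθ0
  lenD t ht := by
    show clampI θ t = clampI θ θ
    rw [clampI_of_ge θ ht hθ0, clampI_of_ge θ le_rfl hθ0]
  T0 t ht := by
    show Real.cos (clampI θ t) • x + Real.sin (clampI θ t) • w
      = Real.cos (clampI θ 0) • x + Real.sin (clampI θ 0) • w
    rw [clampI_of_nonpos θ ht hθ0, clampI_of_nonpos θ le_rfl hθ0]
  TD t ht := by
    show Real.cos (clampI θ t) • x + Real.sin (clampI θ t) • w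
      = Real.cos (clampI θ θ) • x + Real.sin (clampI θ θ) • w
    rw [clampI_of_ge θ ht hθ0, clampI_of_ge θ le_rfl hθ0]
  lip := by
    intro a b hab
    set a' := clampI θ a with ha'
    set b' := clampI θ b with hb'
    have hab' : a' ≤ b' := clampI_mono θ hab
    have ha0 : 0 ≤ a' := clampI_nonneg _ _
    have hbθ : b' ≤ θ := clampI_le _ _ hθ0
    have hwx : ⟪w, x⟫ = (0:ℝ) := by rw [real_inner_comm]; exact hxw
    have hxx : ⟪x, x⟫ = (1:ℝ) := by rw [real_inner_self_eq_norm_sq, hx]; norm_num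
    have hww : ⟪w, w⟫ = (1:ℝ) := by rw [real_inner_self_eq_norm_sq, hw]; norm_num
    have hinner : ⟪Real.cos a' • x + Real.sin a' • w, Real.cos b' • x + Real.sin b' • w⟫
        = Real.cos (b' - a') := by
      simp only [inner_add_left, inner_add_right, real_inner_smul_left, real_inner_smul_right,
        hxx, hww, hxw, hwx]
      rw [Real.cos_sub]
      ring
    rw [hinner, Real.arccos_cos (by linarith) (by linarith)]

lemma SPath.arc_T_start (x w : F) (θ : ℝ) (hx : ‖x‖ = 1) (hw : ‖w‖ = 1)
    (hxw : ⟪x, w⟫ = 0) (hθ0 : 0 ≤ θ) (hθπ : θ ≤ Real.pi) :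
    (SPath.arc x w θ hx hw hxw hθ0 hθπ).T 0 = x := by
  show Real.cos (clampI θ 0) • x + Real.sin (clampI θ 0) • w = x
  rw [clampI_of_nonpos θ le_rfl hθ0]
  simp

lemma SPath.arc_T_end (x w : F) (θ : ℝ) (hx : ‖x‖ = 1) (hw : ‖w‖ = 1)
    (hxw : ⟪x, w⟫ = 0) (hθ0 : 0 ≤ θ) (hθπ : θ ≤ Real.pi) :
    (SPath.arc x w θ hx hw hxw hθ0 hθπ).T θ = Real.cos θ • x + Real.sin θ • w := by
  show Real.cos (clampI θ θ) • x + Real.sin (clampI θ θ) • w = _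
  rw [clampI_of_ge θ le_rfl hθ0]

lemma SPath.arc_len_end (x w : F) (θ : ℝ) (hx : ‖x‖ = 1) (hw : ‖w‖ = 1)
    (hxw : ⟪x, w⟫ = 0) (hθ0 : 0 ≤ θ) (hθπ : θ ≤ Real.pi) :
    (SPath.arc x w θ hx hw hxw hθ0 hθπ).len θ = θ := by
  show clampI θ θ = θ
  exact clampI_of_ge θ le_rfl hθ0

/-- existence of the arc direction towards `y` -/
lemma exists_arc_dir [FiniteDimensional ℝ F] (hrank : 2 ≤ Module.finrank ℝ F)
    {x y : F} (hx : ‖x‖ = 1) (hy : ‖y‖ = 1) {θ : ℝ} (hθ0 : 0 ≤ θ) (hθπ : θ ≤ Real.pi)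
    (hcos : Real.cos θ = ⟪x, y⟫) :
    ∃ w : F, ‖w‖ = 1 ∧ ⟪x, w⟫ = 0 ∧ y = Real.cos θ • x + Real.sin θ • w := by
  have hxx : ⟪x, x⟫ = (1:ℝ) := by rw [real_inner_self_eq_norm_sq, hx]; norm_num
  set z := y - Real.cos θ • x with hz
  have hxz : ⟪x, z⟫ = 0 := by
    rw [hz, inner_sub_right, real_inner_smul_right, hxx, hcos]; ring
  have hnz : ‖z‖ ^ 2 = Real.sin θ ^ 2 := by
    rw [← real_inner_self_eq_norm_sq, hz]
    have hxy' : ⟪x, y⟫ = Real.cos θ := hcos.symm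
    have hyx' : ⟪y, x⟫ = Real.cos θ := by rw [real_inner_comm]; exact hcos.symm
    simp only [inner_sub_left, inner_sub_right, real_inner_smul_left, real_inner_smul_right,
      hxx, hxy', hyx']
    rw [real_inner_self_eq_norm_sq, hy]
    have := Real.sin_sq_add_cos_sq θ
    nlinarith
  have hsθ : 0 ≤ Real.sin θ := Real.sin_nonneg_of_nonneg_of_le_pi hθ0 hθπ
  by_cases hz0 : z = 0
  · have hsin0 : Real.sin θ = 0 := by
      have : ‖z‖ = 0 := by rw [hz0, norm_zero]
      nlinarith
    have hbot : ((ℝ ∙ x)ᗮ : Submodule ℝ F) ≠ ⊥ := by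
      intro hb
      have htop : (ℝ ∙ x : Submodule ℝ F) = ⊤ := by
        rw [← Submodule.orthogonal_orthogonal (ℝ ∙ x), hb, Submodule.bot_orthogonal_eq_top]
      have h1 : Module.finrank ℝ (ℝ ∙ x : Submodule ℝ F) = Module.finrank ℝ F := by
        rw [htop, finrank_top]
      have hxne : x ≠ 0 := by
        intro h; rw [h, norm_zero] at hx; norm_num at hx
      have h2 := finrank_span_singleton (K := ℝ) hxne
      omega
    obtain ⟨w', hw'mem, hw'ne⟩ := Submodule.exists_mem_ne_zero_of_ne_bot hbot
    refine ⟨‖w'‖⁻¹ • w', ?_, ?_, ?_⟩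
    · rw [norm_smul, norm_inv, norm_norm, inv_mul_cancel₀ (norm_ne_zero_iff.2 hw'ne)]
    · rw [real_inner_smul_right]
      have h0 : ⟪x, w'⟫ = (0:ℝ) := hw'mem x (Submodule.mem_span_singleton_self x)
      rw [h0, mul_zero]
    · rw [hsin0, zero_smul, add_zero]
      have h0 : z = 0 := hz0
      rw [hz, sub_eq_zero] at h0
      exact h0
  · have hsin_pos : 0 < Real.sin θ := by
      rcases eq_or_lt_of_le hsθ with h | h
      · exfalso
        apply hz0
        have h1 : ‖z‖ ^ 2 = 0 := by rw [hnz, ← h]; ring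
        have h2 : ‖z‖ = 0 := by nlinarith [norm_nonneg z]
        exact norm_eq_zero.1 h2
      · exact h
    have hnzv : ‖z‖ = Real.sin θ := by nlinarith [norm_nonneg z]
    refine ⟨‖z‖⁻¹ • z, ?_, ?_, ?_⟩
    · rw [norm_smul, norm_inv, norm_norm, inv_mul_cancel₀ (norm_ne_zero_iff.2 hz0)]
    · rw [real_inner_smul_right, hxz, mul_zero]
    · rw [hnzv, smul_smul, mul_inv_cancel₀ hsin_pos.ne', one_smul, hz]
      abel

end Arc
namespace W21Curve
variable {n : ℕ} {L : ℝ} (c : W21Curve n L)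

/-- the primitive of `‖d2‖` -/
noncomputable def rho0 (t : ℝ) : ℝ := ∫ s in (0:ℝ)..t, ‖c.d2 s‖

lemma intervalIntegrable_d2 {a b : ℝ} (h0 : 0 ≤ a) (hab : a ≤ b) (hb : b ≤ L) :
    IntervalIntegrable c.d2 volume a b := by
  rw [intervalIntegrable_iff_integrableOn_Ioc_of_le hab]
  exact c.hint.mono_set (subset_trans Set.Ioc_subset_Icc_self (Set.Icc_subset_Icc h0 hb))

lemma intervalIntegrable_norm_d2 {a b : ℝ} (h0 : 0 ≤ a) (hab : a ≤ b) (hb : b ≤ L) :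
    IntervalIntegrable (fun s => ‖c.d2 s‖) volume a b :=
  (c.intervalIntegrable_d2 h0 hab hb).norm

lemma rho0_sub {a b : ℝ} (h0 : 0 ≤ a) (hab : a ≤ b) (hb : b ≤ L) :
    c.rho0 b - c.rho0 a = ∫ s in a..b, ‖c.d2 s‖ := by
  have h1 := intervalIntegral.integral_add_adjacent_intervals
    (c.intervalIntegrable_norm_d2 le_rfl h0 (hab.trans hb)) (c.intervalIntegrable_norm_d2 h0 hab hb)
  rw [rho0, rho0, ← h1]; ring

lemma rho0_mono {a b : ℝ} (h0 : 0 ≤ a) (hab : a ≤ b) (hb : b ≤ L) :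
    c.rho0 a ≤ c.rho0 b := by
  have h1 := c.rho0_sub h0 hab hb
  have h2 : 0 ≤ ∫ s in a..b, ‖c.d2 s‖ :=
    intervalIntegral.integral_nonneg hab (fun u _ => norm_nonneg _)
  linarith

lemma d1_sub {a b : ℝ} (h0 : 0 ≤ a) (hab : a ≤ b) (hb : b ≤ L) :
    c.d1 b - c.d1 a = ∫ s in a..b, c.d2 s := by
  rw [c.hAC b ⟨h0.trans hab, hb⟩, c.hAC a ⟨h0, hab.trans hb⟩]
  have h1 := intervalIntegral.integral_add_adjacent_intervals
    (c.intervalIntegrable_d2 le_rfl h0 (hab.trans hb)) (c.intervalIntegrable_d2 h0 hab hb)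
  rw [← h1]; abel

lemma chord {a b : ℝ} (h0 : 0 ≤ a) (hab : a ≤ b) (hb : b ≤ L) :
    ‖c.d1 b - c.d1 a‖ ≤ c.rho0 b - c.rho0 a := by
  rw [c.d1_sub h0 hab hb, c.rho0_sub h0 hab hb]
  exact intervalIntegral.norm_integral_le_integral_norm hab

lemma contOn_rho0 : ContinuousOn c.rho0 (Set.Icc 0 L) := by
  have h := intervalIntegral.continuousOn_primitive (f := fun s => ‖c.d2 s‖)
    (a := 0) (b := L) (μ := volume) c.hint.norm
  apply h.congr
  intro x hx
  rw [rho0, intervalIntegral.integral_of_le hx.1]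

lemma unit' {a : ℝ} (h0 : 0 ≤ a) (hL : a ≤ L) : ‖c.d1 a‖ = 1 := c.hunit a ⟨h0, hL⟩

lemma angle_le_small {δ : ℝ} (hδ1 : δ ≤ 1) {a b : ℝ} (h0 : 0 ≤ a) (hab : a ≤ b) (hb : b ≤ L)
    (hs : c.rho0 b - c.rho0 a ≤ δ) :
    Real.arccos ⟪c.d1 a, c.d1 b⟫ ≤ (Real.sqrt (1 - (δ/2)^2))⁻¹ * (c.rho0 b - c.rho0 a) := by
  have hch := c.chord h0 hab hb
  rw [← norm_sub_rev] at hch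
  have h1 := arccos_inner_le_of_chord (c.unit' h0 (hab.trans hb)) (c.unit' (h0.trans hab) hb)
    hδ1 (le_trans hch hs)
  have h2 : (Real.sqrt (1 - (δ/2)^2))⁻¹ * ‖c.d1 a - c.d1 b‖
      ≤ (Real.sqrt (1 - (δ/2)^2))⁻¹ * (c.rho0 b - c.rho0 a) := by
    apply mul_le_mul_of_nonneg_left hch
    positivity
  linarith

lemma angle_le_aux (δ : ℝ) (hδ0 : 0 < δ) (hδ1 : δ ≤ 1) (m : ℕ) :
    ∀ a b : ℝ, 0 ≤ a → a ≤ b → b ≤ L → c.rho0 b - c.rho0 a ≤ m * δ →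
    Real.arccos ⟪c.d1 a, c.d1 b⟫ ≤ (Real.sqrt (1 - (δ/2)^2))⁻¹ * (c.rho0 b - c.rho0 a) := by
  induction m with
  | zero =>
    intro a b h0 hab hb hm
    have hM0 : 0 ≤ c.rho0 b - c.rho0 a := by linarith [c.rho0_mono h0 hab hb]
    have hMeq : c.rho0 b - c.rho0 a = 0 := le_antisymm (by simpa using hm) hM0
    have hch := c.chord h0 hab hb
    rw [hMeq] at hch
    have heq : c.d1 b = c.d1 a := by
      have := norm_le_zero_iff.1 hch
      rwa [sub_eq_zero] at this
    rw [heq, real_inner_self_eq_norm_sq, c.unit' h0 (hab.trans hb)]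
    rw [hMeq]
    norm_num [Real.arccos_one]
  | succ m ih =>
    intro a b h0 hab hb hm
    by_cases hs : c.rho0 b - c.rho0 a ≤ δ
    · exact c.angle_le_small hδ1 h0 hab hb hs
    · push_neg at hs
      have hcont := (c.contOn_rho0).mono (Set.Icc_subset_Icc h0 hb)
      have hmid : c.rho0 a + δ ∈ Set.Icc (c.rho0 a) (c.rho0 b) := ⟨by linarith, by linarith⟩
      obtain ⟨t₀, ht₀mem, ht₀⟩ := intermediate_value_Icc hab hcont hmid
      have ht₀0 : 0 ≤ t₀ := h0.trans ht₀mem.1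
      have ht₀L : t₀ ≤ L := ht₀mem.2.trans hb
      have tri := arccos_inner_triangle (c.unit' h0 (hab.trans hb)) (c.unit' ht₀0 ht₀L)
        (c.unit' (h0.trans hab) hb)
      have h1 : c.rho0 t₀ - c.rho0 a ≤ δ := by rw [ht₀]; linarith
      have hsm := c.angle_le_small hδ1 h0 ht₀mem.1 ht₀L h1
      have h2 : c.rho0 b - c.rho0 t₀ ≤ m * δ := by
        rw [ht₀]
        push_cast at hm
        linarith
      have hih := ih t₀ b ht₀0 ht₀mem.2 hb h2
      have hrw : c.rho0 t₀ = c.rho0 a + δ := ht₀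
      calc Real.arccos ⟪c.d1 a, c.d1 b⟫
          ≤ Real.arccos ⟪c.d1 a, c.d1 t₀⟫ + Real.arccos ⟪c.d1 t₀, c.d1 b⟫ := tri
      _ ≤ (Real.sqrt (1 - (δ/2)^2))⁻¹ * (c.rho0 t₀ - c.rho0 a)
            + (Real.sqrt (1 - (δ/2)^2))⁻¹ * (c.rho0 b - c.rho0 t₀) := by linarith
      _ = (Real.sqrt (1 - (δ/2)^2))⁻¹ * (c.rho0 b - c.rho0 a) := by ring

/-- Lemma A: the angle between tangents is bounded by the total curvature in between. -/
lemma angle_le {a b : ℝ} (h0 : 0 ≤ a) (hab : a ≤ b) (hb : b ≤ L) :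
    Real.arccos ⟪c.d1 a, c.d1 b⟫ ≤ c.rho0 b - c.rho0 a := by
  set M := c.rho0 b - c.rho0 a with hM
  have hM0 : 0 ≤ M := by simp only [hM]; linarith [c.rho0_mono h0 hab hb]
  have hev : ∀ᶠ δ in nhdsWithin 0 (Set.Ioi (0:ℝ)),
      Real.arccos ⟪c.d1 a, c.d1 b⟫ ≤ (Real.sqrt (1 - (δ/2)^2))⁻¹ * M := by
    filter_upwards [Ioc_mem_nhdsGT one_pos]
    intro δ hδ
    apply c.angle_le_aux δ hδ.1 hδ.2 (Nat.ceil (M/δ)) a b h0 hab hb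
    have h1 : M / δ ≤ (Nat.ceil (M/δ) : ℝ) := Nat.le_ceil _
    rw [div_le_iff₀ hδ.1] at h1
    exact hM ▸ h1
  have htend : Filter.Tendsto (fun δ : ℝ => (Real.sqrt (1 - (δ/2)^2))⁻¹ * M)
      (nhdsWithin 0 (Set.Ioi (0:ℝ))) (nhds M) := by
    have hc : ContinuousAt (fun δ : ℝ => (Real.sqrt (1 - (δ/2)^2))⁻¹ * M) 0 := by
      apply ContinuousAt.mul _ continuousAt_const
      apply ContinuousAt.inv₀
      · exact (Real.continuous_sqrt.comp (by continuity)).continuousAt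
      · norm_num
    have h2 := hc.tendsto.mono_left (nhdsWithin_le_nhds (s := Set.Ioi (0:ℝ)))
    norm_num at h2
    exact h2
  exact ge_of_tendsto htend hev

/-- the spherical path traced by the tangent. -/
noncomputable def toSPath : SPath (EuclideanSpace ℝ (Fin n)) where
  T t := c.d1 (clampI L t)
  len t := c.rho0 (clampI L t)
  D := L
  hD := c.posL.le
  contT := c.hcont.comp_continuous (clampI_continuous L) (fun t => clampI_mem L t c.posL.le)
  contLen := (c.contOn_rho0).comp_continuous (clampI_continuous L)
    (fun t => clampI_mem L t c.posL.le)
  monoLen a b hab := c.rho0_mono (clampI_nonneg _ _) (clampI_mono _ hab)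
    (clampI_le _ _ c.posL.le)
  unit t := c.hunit _ (clampI_mem L t c.posL.le)
  len0 t ht := by
    show c.rho0 (clampI L t) = 0
    rw [clampI_of_nonpos L ht c.posL.le, rho0, intervalIntegral.integral_same]
  lenD t ht := by
    show c.rho0 (clampI L t) = c.rho0 (clampI L L)
    rw [clampI_of_ge L ht c.posL.le, clampI_of_ge L le_rfl c.posL.le]
  T0 t ht := by
    show c.d1 (clampI L t) = c.d1 (clampI L 0)
    rw [clampI_of_nonpos L ht c.posL.le, clampI_of_nonpos L le_rfl c.posL.le]
  TD t ht := by
    show c.d1 (clampI L t) = c.d1 (clampI L L)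
    rw [clampI_of_ge L ht c.posL.le, clampI_of_ge L le_rfl c.posL.le]
  lip a b hab :=
    c.angle_le (clampI_nonneg _ _) (clampI_mono _ hab) (clampI_le _ _ c.posL.le)

lemma toSPath_T_start : c.toSPath.T 0 = c.d1 0 := by
  show c.d1 (clampI L 0) = c.d1 0
  rw [clampI_of_nonpos L le_rfl c.posL.le]

lemma toSPath_T_end : c.toSPath.T c.toSPath.D = c.d1 L := by
  show c.d1 (clampI L L) = c.d1 L
  rw [clampI_of_ge L le_rfl c.posL.le]

lemma toSPath_len_end : c.toSPath.len c.toSPath.D = ∫ s in (0:ℝ)..L, ‖c.d2 s‖ := by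
  show c.rho0 (clampI L L) = _
  rw [clampI_of_ge L le_rfl c.posL.le, rho0]

lemma toSPath_mem {s : ℝ} (h0 : 0 ≤ s) (hL : s ≤ L) : c.toSPath.T s = c.d1 s := by
  show c.d1 (clampI L s) = c.d1 s
  rw [clampI_of_mem L h0 hL]

end W21Curve
section Horn
variable {F : Type*} [NormedAddCommGroup F] [InnerProductSpace ℝ F]

/-- Horn's lemma: a closed spherical path not contained in any open hemisphere
has length at least `2π`. -/
theorem SPath.horn (P : SPath F) (hcl : P.T P.D = P.T 0)
    (hhemi : ∀ m : F, ‖m‖ = 1 → ∃ t, ⟪P.T t, m⟫ ≤ 0) :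
    2 * Real.pi ≤ P.len P.D := by
  by_contra hK
  push_neg at hK
  set K := P.len P.D with hKdef
  have hK0 : 0 ≤ K := P.len_nonneg _
  have hlen0 : P.len 0 = 0 := P.len0 0 le_rfl
  have hlenD : ∀ t, t ∈ Set.Icc 0 P.D → P.len t ≤ K := by
    intro t ht
    exact hKdef ▸ P.monoLen ht.2
  -- find the half-length time t₁
  obtain ⟨t₁, ht₁mem, ht₁⟩ : ∃ t₁ ∈ Set.Icc 0 P.D, P.len t₁ = K / 2 := by
    have hmem : K / 2 ∈ Set.Icc (P.len 0) (P.len P.D) := by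
      rw [hlen0, ← hKdef]
      constructor <;> linarith
    exact intermediate_value_Icc P.hD P.contLen.continuousOn hmem
  set p := P.T 0 with hp
  set q := P.T t₁ with hq
  have hpu : ‖p‖ = 1 := P.unit 0
  have hqu : ‖q‖ = 1 := P.unit t₁
  have hdpq : Real.arccos ⟪p, q⟫ ≤ K / 2 := by
    have h := P.lip 0 t₁ ht₁mem.1
    rwa [hlen0, ht₁, sub_zero] at h
  have hpq_mem := inner_unit_mem hpu hqu
  have hpqne : (-1 : ℝ) < ⟪p, q⟫ := by
    rcases eq_or_lt_of_le hpq_mem.1 with h | h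
    · exfalso
      rw [← h, Real.arccos_neg_one] at hdpq
      linarith [Real.pi_pos]
    · exact h
  have hpp : ⟪p, p⟫ = (1:ℝ) := P.inner_self_one 0
  have hqq : ⟪q, q⟫ = (1:ℝ) := P.inner_self_one t₁
  have hnpq : ‖p + q‖ ^ 2 = 2 + 2 * ⟪p, q⟫ := by
    rw [norm_add_sq_real, hpu, hqu]; ring
  have hnpq_pos : 0 < ‖p + q‖ := by
    have h2 : 0 < ‖p + q‖ ^ 2 := by rw [hnpq]; linarith
    nlinarith [norm_nonneg (p + q)]
  set m := ‖p + q‖⁻¹ • (p + q) with hm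
  have hmu : ‖m‖ = 1 := by
    rw [hm, norm_smul, norm_inv, norm_norm, inv_mul_cancel₀ hnpq_pos.ne']
  have hpm : ⟪p, m⟫ = (1 + ⟪p, q⟫) / ‖p + q‖ := by
    rw [hm, real_inner_smul_right, inner_add_right, hpp]
    ring
  have hqm : ⟪q, m⟫ = (1 + ⟪p, q⟫) / ‖p + q‖ := by
    rw [hm, real_inner_smul_right, inner_add_right, hqq, real_inner_comm q p]
    ring
  have hpm0 : 0 < ⟪p, m⟫ := by
    rw [hpm]
    have h1 : 0 < 1 + ⟪p, q⟫ := by linarith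
    positivity
  have hqm0 : 0 < ⟪q, m⟫ := by
    rw [hqm]
    have h1 : 0 < 1 + ⟪p, q⟫ := by linarith
    positivity
  -- reflection identity: p = (2 * ⟪q, m⟫) • m - q
  have hrefl : p = (2 * ⟪q, m⟫) • m - q := by
    have hcoef : 2 * ⟪q, m⟫ * ‖p + q‖⁻¹ = 1 := by
      rw [hqm]
      rw [pow_two] at hnpq
      field_simp
      linarith
    rw [hm, smul_smul, hcoef, one_smul]
    abel
  -- the "bad point", clamped into [0, P.D]
  obtain ⟨t₂', ht₂'⟩ := hhemi m hmu
  set t₂ := max 0 (min t₂' P.D) with ht₂def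
  have ht₂mem : t₂ ∈ Set.Icc 0 P.D := by
    constructor
    · exact le_max_left _ _
    · exact max_le P.hD (min_le_right _ _)
  have ht₂ : ⟪P.T t₂, m⟫ ≤ 0 := by
    have : P.T t₂ = P.T t₂' := by
      rcases le_total t₂' 0 with h1 | h1
      · rw [ht₂def, min_eq_left (h1.trans P.hD), max_eq_left h1, ← hp, P.T0 t₂' h1]
      · rcases le_total t₂' P.D with h2 | h2
        · rw [ht₂def, min_eq_left h2, max_eq_right h1]
        · rw [ht₂def, min_eq_right h2, max_eq_right P.hD, P.TD t₂' h2]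
    rwa [this]
  -- continuity of the inner product along the path
  have hg : Continuous fun t => (⟪P.T t, m⟫ : ℝ) := P.contT.inner continuous_const
  -- find an equator point t₃ and derive π ≤ K / 2
  have key : ∀ t₃ : ℝ, ⟪P.T t₃, m⟫ = 0 →
      Real.arccos ⟪p, P.T t₃⟫ + Real.arccos ⟪P.T t₃, q⟫ = Real.pi := by
    intro t₃ h0
    set x := P.T t₃ with hx
    have hmx : ⟪m, x⟫ = (0:ℝ) := by rw [real_inner_comm]; exact h0
    have h1 : ⟪p, x⟫ = - ⟪x, q⟫ := by
      conv_lhs => rw [hrefl]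
      rw [inner_sub_left, real_inner_smul_left, hmx, real_inner_comm q x]
      ring
    have h2 : ⟪x, q⟫ = - ⟪p, x⟫ := by rw [h1]; ring
    rw [h2, Real.arccos_neg]
    ring
  have hmain : Real.pi ≤ K / 2 := by
    rcases le_total t₂ t₁ with hcase | hcase
    · obtain ⟨t₃, ht₃mem, ht₃⟩ : ∃ t₃ ∈ Set.Icc 0 t₂, (⟪P.T t₃, m⟫:ℝ) = 0 := by
        have hmem : (0:ℝ) ∈ Set.Icc (⟪P.T t₂, m⟫:ℝ) (⟪P.T 0, m⟫:ℝ) := ⟨ht₂, hpm0.le⟩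
        exact intermediate_value_Icc' ht₂mem.1 hg.continuousOn hmem
      have hb1 := P.lip 0 t₃ ht₃mem.1
      rw [hlen0, sub_zero] at hb1
      have hb2 := P.lip t₃ t₁ (ht₃mem.2.trans hcase)
      rw [ht₁] at hb2
      have := key t₃ ht₃
      linarith
    · obtain ⟨t₃, ht₃mem, ht₃⟩ : ∃ t₃ ∈ Set.Icc t₂ P.D, (⟪P.T t₃, m⟫:ℝ) = 0 := by
        have hD : (⟪P.T P.D, m⟫:ℝ) = ⟪p, m⟫ := by rw [hcl]
        have hmem : (0:ℝ) ∈ Set.Icc (⟪P.T t₂, m⟫:ℝ) (⟪P.T P.D, m⟫:ℝ) := by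
          rw [hD]
          exact ⟨ht₂, hpm0.le⟩
        exact intermediate_value_Icc ht₂mem.2 hg.continuousOn hmem
      have hb1 := P.lip t₁ t₃ (hcase.trans ht₃mem.1)
      rw [ht₁] at hb1
      have hb2 := P.lip t₃ P.D ht₃mem.2
      rw [hcl] at hb2
      have hk := key t₃ ht₃
      have hb1' : Real.arccos ⟪P.T t₃, q⟫ ≤ P.len t₃ - K / 2 := by
        rw [real_inner_comm]; exact hb1
      have hb2' : Real.arccos ⟪p, P.T t₃⟫ ≤ P.len P.D - P.len t₃ := by
        rw [real_inner_comm]; exact hb2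
      linarith [hKdef]
  linarith [Real.pi_pos]
end Horn
open Fin.NatCast
section Chain
variable {n N : ℕ} [NeZero N]

/-- Invariant carried along the concatenation of the tangent paths. -/
structure ChainInv (L : Fin N → ℝ) (c : ∀ j, W21Curve n (L j)) (θ : Fin N → ℝ)
    (k : ℕ) (P : SPath (EuclideanSpace ℝ (Fin n))) : Prop where
  startT : P.T 0 = (c 0).d1 0
  endT : P.T P.D = (c (k : Fin N)).d1 0
  lenEq : P.len P.D
    = ∑ j ∈ Finset.range k, ((∫ s in (0:ℝ)..(L (j : Fin N)), ‖(c (j : Fin N)).d2 s‖) + θ (j : Fin N))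
  cover : ∀ j : ℕ, j < k → ∀ s : ℝ, 0 ≤ s → s ≤ L (j : Fin N) →
    ∃ t, P.T t = (c (j : Fin N)).d1 s

/-- one piece: the tangent path of curve `k` followed by the vertex arc. -/
noncomputable def pieceP (hn : 2 ≤ n) (L : Fin N → ℝ) (c : ∀ j, W21Curve n (L j))
    (θ : Fin N → ℝ) (hθ : ∀ j, θ j ∈ Set.Icc (0:ℝ) Real.pi)
    (hcos : ∀ j, Real.cos (θ j) = (inner ℝ ((c j).d1 (L j)) ((c (j + 1)).d1 0) : ℝ))
    (k : ℕ) :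
    {P : SPath (EuclideanSpace ℝ (Fin n)) //
      P.T 0 = (c (k : Fin N)).d1 0 ∧
      P.T P.D = (c ((k : Fin N) + 1)).d1 0 ∧
      P.len P.D = (∫ s in (0:ℝ)..(L (k : Fin N)), ‖(c (k : Fin N)).d2 s‖) + θ (k : Fin N) ∧
      ∀ s : ℝ, 0 ≤ s → s ≤ L (k : Fin N) → ∃ t, P.T t = (c (k : Fin N)).d1 s} := by
  classical
  set j : Fin N := (k : Fin N) with hj
  have hx : ‖(c j).d1 (L j)‖ = 1 := (c j).hunit _ ⟨(c j).posL.le, le_rfl⟩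
  have hy : ‖(c (j+1)).d1 0‖ = 1 := (c (j+1)).hunit 0 ⟨le_rfl, (c (j+1)).posL.le⟩
  have hrank : 2 ≤ Module.finrank ℝ (EuclideanSpace ℝ (Fin n)) := by
    rw [finrank_euclideanSpace_fin]; exact hn
  have hex := exists_arc_dir hrank hx hy (hθ j).1 (hθ j).2 (hcos j)
  set w := Classical.choose hex with hwdef
  obtain ⟨hw1, hw2, hw3⟩ := Classical.choose_spec hex
  refine ⟨((c j).toSPath).trans
    (SPath.arc ((c j).d1 (L j)) w (θ j) hx hw1 hw2 (hθ j).1 (hθ j).2) ?_, ?_, ?_, ?_, ?_⟩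
  · rw [(c j).toSPath_T_end, SPath.arc_T_start]
  · rw [SPath.trans_T_start, (c j).toSPath_T_start]
  · rw [SPath.trans_T_end]
    show (SPath.arc _ w (θ j) hx hw1 hw2 (hθ j).1 (hθ j).2).T (θ j) = _
    rw [SPath.arc_T_end]
    exact hw3.symm
  · rw [SPath.trans_len_end]
    have h1 : (c j).toSPath.len (c j).toSPath.D = ∫ s in (0:ℝ)..(L j), ‖(c j).d2 s‖ :=
      (c j).toSPath_len_end
    have h2 : (SPath.arc ((c j).d1 (L j)) w (θ j) hx hw1 hw2 (hθ j).1 (hθ j).2).len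
        (SPath.arc ((c j).d1 (L j)) w (θ j) hx hw1 hw2 (hθ j).1 (hθ j).2).D = θ j :=
      SPath.arc_len_end _ _ _ _ _ _ _ _
    rw [h1, h2]
  · intro s hs1 hs2
    obtain ⟨u, hu⟩ := SPath.trans_mem_left ((c j).toSPath)
      (SPath.arc ((c j).d1 (L j)) w (θ j) hx hw1 hw2 (hθ j).1 (hθ j).2)
      (by rw [(c j).toSPath_T_end, SPath.arc_T_start]) s
    exact ⟨u, by rw [hu, (c j).toSPath_mem hs1 hs2]⟩

/-- the full concatenated tangent path up to stage `k`. -/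
noncomputable def chainP (hn : 2 ≤ n) (L : Fin N → ℝ) (c : ∀ j, W21Curve n (L j))
    (θ : Fin N → ℝ) (hθ : ∀ j, θ j ∈ Set.Icc (0:ℝ) Real.pi)
    (hcos : ∀ j, Real.cos (θ j) = (inner ℝ ((c j).d1 (L j)) ((c (j + 1)).d1 0) : ℝ)) :
    (k : ℕ) → {P : SPath (EuclideanSpace ℝ (Fin n)) // ChainInv L c θ k P} :=
  Nat.rec
    (⟨SPath.const ((c 0).d1 0) ((c 0).hunit 0 ⟨le_rfl, (c 0).posL.le⟩), by
      refine ⟨rfl, ?_, ?_, ?_⟩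
      · show (c 0).d1 0 = (c ((0:ℕ) : Fin N)).d1 0
        have h0 : ((0:ℕ) : Fin N) = 0 := Nat.cast_zero
        rw [h0]
      · simp [SPath.const]
      · intro j hj; exact absurd hj (Nat.not_lt_zero j)⟩)
    (fun k prev =>
      let pc := pieceP hn L c θ hθ hcos k
      have hmatch : prev.1.T prev.1.D = pc.1.T 0 := by rw [prev.2.endT, pc.2.1]
      ⟨prev.1.trans pc.1 hmatch, by
        refine ⟨?_, ?_, ?_, ?_⟩
        · rw [SPath.trans_T_start, prev.2.startT]
        · rw [SPath.trans_T_end, pc.2.2.1, Nat.cast_add_one]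
        · rw [SPath.trans_len_end, prev.2.lenEq, pc.2.2.2.1, Finset.sum_range_succ]
        · intro j hj s hs1 hs2
          rcases Nat.lt_or_ge j k with h | h
          · obtain ⟨t, ht⟩ := prev.2.cover j h s hs1 hs2
            obtain ⟨u, hu⟩ := SPath.trans_mem_left prev.1 pc.1 hmatch t
            exact ⟨u, by rw [hu, ht]⟩
          · have hjk : j = k := by omega
            subst hjk
            obtain ⟨t, ht⟩ := pc.2.2.2.2 s hs1 hs2
            obtain ⟨u, hu⟩ := SPath.trans_mem_right prev.1 pc.1 hmatch t
            exact ⟨u, by rw [hu, ht]⟩⟩)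

end Chain
section NonHemi
variable {n N : ℕ} [NeZero N]

lemma nonhemi (L : Fin N → ℝ) (c : ∀ j, W21Curve n (L j))
    (hloop : ∀ j : Fin N, (c j).f (L j) = (c (j + 1)).f 0)
    (e : EuclideanSpace ℝ (Fin n)) :
    ∃ (j : Fin N) (s : ℝ), 0 ≤ s ∧ s ≤ L j ∧ ⟪(c j).d1 s, e⟫ ≤ 0 := by
  by_contra hcon
  push_neg at hcon
  have hInt : ∀ j : Fin N, IntervalIntegrable (fun s => (⟪e, (c j).d1 s⟫ : ℝ))
      MeasureTheory.volume 0 (L j) := by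
    intro j
    apply ContinuousOn.intervalIntegrable
    rw [Set.uIcc_of_le (c j).posL.le]
    exact continuousOn_const.inner (c j).hcont
  have hFTC : ∀ j : Fin N, (∫ s in (0:ℝ)..(L j), (⟪e, (c j).d1 s⟫ : ℝ))
      = ⟪e, (c j).f (L j)⟫ - ⟪e, (c j).f 0⟫ := by
    intro j
    have hcontf : ContinuousOn (fun s => (⟪e, (c j).f s⟫ : ℝ)) (Set.Icc 0 (L j)) := by
      apply ContinuousOn.inner continuousOn_const
      intro s hs
      exact ((c j).hderiv s hs).continuousWithinAt
    apply intervalIntegral.integral_eq_sub_of_hasDeriv_right_of_le (c j).posL.le hcontf _ (hInt j)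
    intro x hx
    have hIcc : Set.Icc (0:ℝ) (L j) ∈ nhds x := Icc_mem_nhds hx.1 hx.2
    have hd := ((c j).hderiv x ⟨hx.1.le, hx.2.le⟩).hasDerivAt hIcc
    have hcomp := ((innerSL ℝ e).hasFDerivAt).comp_hasDerivAt x hd
    exact hcomp.hasDerivWithinAt
  have hpos : ∀ j : Fin N, 0 < ∫ s in (0:ℝ)..(L j), (⟪e, (c j).d1 s⟫ : ℝ) := by
    intro j
    apply intervalIntegral.intervalIntegral_pos_of_pos_on (hInt j) _ (c j).posL
    intro x hx
    have := hcon j x hx.1.le hx.2.le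
    rwa [real_inner_comm] at this
  have hsum0 : ∑ j : Fin N, (∫ s in (0:ℝ)..(L j), (⟪e, (c j).d1 s⟫ : ℝ)) = 0 := by
    have hterm : ∀ j : Fin N, (∫ s in (0:ℝ)..(L j), (⟪e, (c j).d1 s⟫ : ℝ))
        = ⟪e, (c (j+1)).f 0⟫ - ⟪e, (c j).f 0⟫ := by
      intro j
      rw [hFTC j, hloop j]
    rw [Finset.sum_congr rfl (fun j _ => hterm j), Finset.sum_sub_distrib]
    have hbij : ∑ j : Fin N, (⟪e, (c (j+1)).f 0⟫ : ℝ) = ∑ j : Fin N, (⟪e, (c j).f 0⟫ : ℝ) := by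
      apply Fintype.sum_equiv (Equiv.addRight (1 : Fin N))
      intro j
      simp [Equiv.coe_addRight]
    rw [hbij, sub_self]
  have hne : (Finset.univ : Finset (Fin N)).Nonempty := ⟨0, Finset.mem_univ 0⟩
  have := Finset.sum_pos (fun j _ => hpos j) hne
  linarith

end NonHemi

/-- Fenchel's theorem for piecewise `W^{2,1}` closed curves with vertices. -/
theorem fenchel_piecewise (n N : ℕ) (hn : 2 ≤ n) [NeZero N]
    (L : Fin N → ℝ) (c : ∀ j, W21Curve n (L j))
    (hloop : ∀ j : Fin N, (c j).f (L j) = (c (j + 1)).f 0)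
    (θ : Fin N → ℝ) (hθ : ∀ j, θ j ∈ Set.Icc (0:ℝ) Real.pi)
    (hcos : ∀ j, Real.cos (θ j) = (inner ℝ ((c j).d1 (L j)) ((c (j + 1)).d1 0) : ℝ)) :
    ∑ j, (∫ s in (0:ℝ)..(L j), ‖(c j).d2 s‖) ≥ 2 * Real.pi - ∑ j, θ j := by
  set P := (chainP hn L c θ hθ hcos N).1 with hP
  have inv := (chainP hn L c θ hθ hcos N).2
  have hclosed : P.T P.D = P.T 0 := by
    rw [inv.endT, inv.startT, Fin.natCast_self]
  have hhemi : ∀ m : EuclideanSpace ℝ (Fin n), ‖m‖ = 1 → ∃ t, ⟪P.T t, m⟫ ≤ 0 := by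
    intro m _
    obtain ⟨j, s, hs0, hsL, hip⟩ := nonhemi L c hloop m
    have hjj : ((j.val : ℕ) : Fin N) = j := Fin.cast_val_eq_self j
    have hsL' : s ≤ L ((j.val : ℕ) : Fin N) := by rw [hjj]; exact hsL
    obtain ⟨t, ht⟩ := inv.cover j.val j.isLt s hs0 hsL'
    rw [hjj] at ht
    exact ⟨t, by rw [ht]; exact hip⟩
  have hhorn := P.horn hclosed hhemi
  have hlen := inv.lenEq
  have hsum := Fin.sum_univ_eq_sum_range
    (fun j : ℕ => (∫ s in (0:ℝ)..(L (j : Fin N)), ‖(c (j : Fin N)).d2 s‖) + θ (j : Fin N)) N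
  have hcast : ∑ i : Fin N,
      ((∫ s in (0:ℝ)..(L ((i.val : ℕ) : Fin N)), ‖(c ((i.val : ℕ) : Fin N)).d2 s‖)
        + θ ((i.val : ℕ) : Fin N))
      = ∑ i : Fin N, ((∫ s in (0:ℝ)..(L i), ‖(c i).d2 s‖) + θ i) := by
    apply Finset.sum_congr rfl
    intro i _
    rw [Fin.cast_val_eq_self]
  rw [← hsum, hcast, Finset.sum_add_distrib] at hlen
  rw [ge_iff_le]
  linarith
end

section
/- There exists a planar Θ-network Γ ∈ Θ(ℝ²) with E[Γ] < 4√(ϖ*), where ϖ* = 32(2m*−1)E(m*)² and m* ∈ (0,1) is the unique parameter with K(m*) = 2E(m*). -/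
open Real MeasureTheory RealInnerProductSpace

/-- A unit-speed `H²`-curve of length `L` in `ℝⁿ`: `f` is `C¹` on `[0,L]` with unit-speed
derivative `d1`, and `d1` is absolutely continuous with a.e. derivative `d2 ∈ L²(0,L)`. -/
structure H2Curve (n : ℕ) (L : ℝ) where
  f : ℝ → EuclideanSpace ℝ (Fin n)
  d1 : ℝ → EuclideanSpace ℝ (Fin n)
  d2 : ℝ → EuclideanSpace ℝ (Fin n)
  posL : 0 < L
  hderiv : ∀ s ∈ Set.Icc (0:ℝ) L, HasDerivWithinAt f (d1 s) (Set.Icc (0:ℝ) L) s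
  hcont : ContinuousOn d1 (Set.Icc (0:ℝ) L)
  hunit : ∀ s ∈ Set.Icc (0:ℝ) L, ‖d1 s‖ = 1
  hAC : ∀ s ∈ Set.Icc (0:ℝ) L, d1 s = d1 0 + ∫ t in (0:ℝ)..s, d2 t
  hint : IntegrableOn d2 (Set.Icc (0:ℝ) L)
  hL2 : IntegrableOn (fun s => ‖d2 s‖ ^ 2) (Set.Icc (0:ℝ) L)

/-- Bending energy `∫₀^L ‖γ''‖² ds`. -/
noncomputable def H2Curve.bend {n : ℕ} {L : ℝ} (c : H2Curve n L) : ℝ :=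
  ∫ s in (0:ℝ)..L, ‖c.d2 s‖ ^ 2

/-- The curve is closed, i.e. `L`-periodic. -/
def H2Curve.IsClosedCurve {n : ℕ} {L : ℝ} (c : H2Curve n L) : Prop :=
  Function.Periodic c.f L

/-- The closed curve has a point of multiplicity `k`: `k` distinct parameters in `[0,L)`
mapped to one point. -/
def H2Curve.HasMultPt {n : ℕ} {L : ℝ} (c : H2Curve n L) (k : ℕ) : Prop :=
  ∃ (p : EuclideanSpace ℝ (Fin n)) (t : Fin k → ℝ),
    StrictMono t ∧ (∀ i, t i ∈ Set.Ico (0:ℝ) L) ∧ ∀ i, c.f (t i) = p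

/-- An `n`-dimensional `Θ`-network: three unit-speed `H²`-curves meeting at two triple
junctions with equal angles `2π/3`. -/
structure ThetaNetwork (n : ℕ) where
  L : Fin 3 → ℝ
  c : ∀ i, H2Curve n (L i)
  junc0 : ∀ i j, (c i).f 0 = (c j).f 0
  junc1 : ∀ i j, (c i).f (L i) = (c j).f (L j)
  ang0 : ∀ i j, i ≠ j → (inner ℝ ((c i).d1 0) ((c j).d1 0) : ℝ) = -(1 / 2)
  ang1 : ∀ i j, i ≠ j → (inner ℝ ((c i).d1 (L i)) ((c j).d1 (L j)) : ℝ) = -(1 / 2)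

/-- The elastic energy `E[Γ] = Σᵢ (∫‖κᵢ‖² ds + Lᵢ)` of a `Θ`-network. -/
noncomputable def ThetaNetwork.energy {n : ℕ} (Γ : ThetaNetwork n) : ℝ :=
  ∑ i, ((Γ.c i).bend + Γ.L i)

section Aux

noncomputable def e2 (a b : ℝ) : EuclideanSpace ℝ (Fin 2) := WithLp.toLp 2 ![a, b]

lemma hasDerivAt_e2 {a b : ℝ → ℝ} {a' b' : ℝ} {t : ℝ}
    (ha : HasDerivAt a a' t) (hb : HasDerivAt b b' t) :
    HasDerivAt (fun s => e2 (a s) (b s)) (e2 a' b') t := by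
  have h1 : HasDerivAt (fun s => (![a s, b s] : Fin 2 → ℝ)) ![a', b'] t := by
    rw [hasDerivAt_pi]
    intro i
    fin_cases i
    · simpa using ha
    · simpa using hb
  exact ((PiLp.continuousLinearEquiv 2 ℝ
    (fun _ : Fin 2 => ℝ)).symm.toContinuousLinearMap.hasFDerivAt).comp_hasDerivAt t h1

lemma continuous_e2 {a b : ℝ → ℝ} (ha : Continuous a) (hb : Continuous b) :
    Continuous fun s => e2 (a s) (b s) := by
  have h1 : Continuous fun s => (![a s, b s] : Fin 2 → ℝ) := by
    apply continuous_pi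
    intro i
    fin_cases i
    · simpa using ha
    · simpa using hb
  exact (PiLp.continuousLinearEquiv 2 ℝ (fun _ : Fin 2 => ℝ)).symm.continuous.comp h1

lemma norm_e2 (a b : ℝ) : ‖e2 a b‖ = Real.sqrt (a^2 + b^2) := by
  rw [EuclideanSpace.norm_eq]
  simp [e2, Fin.sum_univ_two, sq_abs]

lemma inner_e2 (a b c d : ℝ) : (inner ℝ (e2 a b) (e2 c d) : ℝ) = a*c + b*d := by
  simp [e2, PiLp.inner_apply, Fin.sum_univ_two]; ring

lemma e2_congr {a b c d : ℝ} (h1 : a = c) (h2 : b = d) : e2 a b = e2 c d := by rw [h1, h2]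

lemma ts1 : Real.sin (7*π/6) = -(1/2) := by
  rw [show (7:ℝ)*π/6 = π + π/6 by ring, Real.sin_add]
  simp [Real.sin_pi_div_six]
lemma tc1 : Real.cos (7*π/6) = -(Real.sqrt 3/2) := by
  rw [show (7:ℝ)*π/6 = π + π/6 by ring, Real.cos_add]
  simp [Real.cos_pi_div_six]
lemma ts2 : Real.sin (7*π/6 - 4*π/3) = -(1/2) := by
  rw [show (7:ℝ)*π/6 - 4*π/3 = -(π/6) by ring, Real.sin_neg, Real.sin_pi_div_six]
lemma tc2 : Real.cos (7*π/6 - 4*π/3) = Real.sqrt 3/2 := by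
  rw [show (7:ℝ)*π/6 - 4*π/3 = -(π/6) by ring, Real.cos_neg, Real.cos_pi_div_six]

noncomputable def straightC : H2Curve 2 (Real.sqrt 3) where
  f s := e2 s 0
  d1 _ := e2 1 0
  d2 _ := 0
  posL := by positivity
  hderiv s _ := (hasDerivAt_e2 (hasDerivAt_id s) (hasDerivAt_const s 0)).hasDerivWithinAt
  hcont := continuousOn_const
  hunit s _ := by rw [norm_e2]; norm_num
  hAC s _ := by simp
  hint := integrableOn_zero
  hL2 := by
    have h : (fun s : ℝ => ‖(0 : EuclideanSpace ℝ (Fin 2))‖ ^ 2) = fun _ => (0:ℝ) := by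
      funext s; simp
    rw [h]
    exact integrableOn_zero

lemma straight_bend : straightC.bend = 0 := by
  unfold H2Curve.bend straightC
  simp

noncomputable def arcC (σ : ℝ) (hσ : σ^2 = 1) : H2Curve 2 (4*π/3) where
  f s := e2 (Real.sqrt 3/2 + Real.cos (7*π/6 - s)) (σ * (1/2 + Real.sin (7*π/6 - s)))
  d1 s := e2 (Real.sin (7*π/6 - s)) (σ * (-Real.cos (7*π/6 - s)))
  d2 s := e2 (-Real.cos (7*π/6 - s)) (σ * (-Real.sin (7*π/6 - s)))
  posL := by positivity
  hderiv s _ := by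
    have hin : HasDerivAt (fun t : ℝ => 7*π/6 - t) (-1) s := by
      simpa using (hasDerivAt_id s).const_sub (7*π/6)
    have hx : HasDerivAt (fun t : ℝ => Real.sqrt 3/2 + Real.cos (7*π/6 - t))
        (Real.sin (7*π/6 - s)) s := by
      have h := ((Real.hasDerivAt_cos (7*π/6 - s)).comp s hin).const_add (Real.sqrt 3/2)
      exact h.congr_deriv (by ring)
    have hy : HasDerivAt (fun t : ℝ => σ * (1/2 + Real.sin (7*π/6 - t)))
        (σ * (-Real.cos (7*π/6 - s))) s := by
      have h := (((Real.hasDerivAt_sin (7*π/6 - s)).comp s hin).const_add (1/2)).const_mul σ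
      exact h.congr_deriv (by ring)
    exact (hasDerivAt_e2 hx hy).hasDerivWithinAt
  hcont := by
    apply Continuous.continuousOn
    exact continuous_e2 (by fun_prop) (by fun_prop)
  hunit s _ := by
    rw [norm_e2, show Real.sin (7*π/6 - s)^2 + (σ * (-Real.cos (7*π/6 - s)))^2 = 1 by
      linear_combination (Real.cos (7*π/6 - s))^2 * hσ + Real.sin_sq_add_cos_sq (7*π/6 - s)]
    exact Real.sqrt_one
  hAC s _ := by
    have hd : ∀ t ∈ Set.uIcc (0:ℝ) s, HasDerivAt
        (fun r => e2 (Real.sin (7*π/6 - r)) (σ * (-Real.cos (7*π/6 - r))))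
        (e2 (-Real.cos (7*π/6 - t)) (σ * (-Real.sin (7*π/6 - t)))) t := by
      intro t _
      have hin : HasDerivAt (fun r : ℝ => 7*π/6 - r) (-1) t := by
        simpa using (hasDerivAt_id t).const_sub (7*π/6)
      have hx : HasDerivAt (fun r : ℝ => Real.sin (7*π/6 - r)) (-Real.cos (7*π/6 - t)) t := by
        have h := (Real.hasDerivAt_sin (7*π/6 - t)).comp t hin
        exact h.congr_deriv (by ring)
      have hy : HasDerivAt (fun r : ℝ => σ * (-Real.cos (7*π/6 - r)))
          (σ * (-Real.sin (7*π/6 - t))) t := by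
        have h := (((Real.hasDerivAt_cos (7*π/6 - t)).comp t hin).neg).const_mul σ
        exact h.congr_deriv (by ring)
      exact hasDerivAt_e2 hx hy
    have hi : IntervalIntegrable
        (fun t => e2 (-Real.cos (7*π/6 - t)) (σ * (-Real.sin (7*π/6 - t)))) volume 0 s :=
      (continuous_e2 (by fun_prop) (by fun_prop)).intervalIntegrable _ _
    rw [intervalIntegral.integral_eq_sub_of_hasDerivAt hd hi]
    abel
  hint := (continuous_e2 (by fun_prop) (by fun_prop)).integrableOn_Icc
  hL2 := ((continuous_e2 (by fun_prop) (by fun_prop)).norm.pow 2).integrableOn_Icc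

lemma arc_bend (σ : ℝ) (hσ : σ^2 = 1) : (arcC σ hσ).bend = 4*π/3 := by
  unfold H2Curve.bend
  have h : ∀ s : ℝ, ‖(arcC σ hσ).d2 s‖ ^ 2 = 1 := by
    intro s
    show ‖e2 (-Real.cos (7*π/6 - s)) (σ * (-Real.sin (7*π/6 - s)))‖ ^ 2 = 1
    rw [norm_e2, show (-Real.cos (7*π/6 - s))^2 + (σ * -Real.sin (7*π/6 - s))^2 = 1 by
      linear_combination (Real.sin (7*π/6 - s))^2 * hσ + Real.sin_sq_add_cos_sq (7*π/6 - s)]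
    rw [Real.sqrt_one]; norm_num
  simp only [h]
  simp

lemma arc_f0 (σ : ℝ) (hσ : σ^2 = 1) : (arcC σ hσ).f 0 = e2 0 0 := by
  show e2 (Real.sqrt 3/2 + Real.cos (7*π/6 - 0)) (σ * (1/2 + Real.sin (7*π/6 - 0))) = e2 0 0
  apply e2_congr <;> rw [sub_zero]
  · rw [tc1]; ring
  · rw [ts1]; ring
lemma arc_fL (σ : ℝ) (hσ : σ^2 = 1) : (arcC σ hσ).f (4*π/3) = e2 (Real.sqrt 3) 0 := by
  show e2 (Real.sqrt 3/2 + Real.cos (7*π/6 - 4*π/3)) (σ * (1/2 + Real.sin (7*π/6 - 4*π/3)))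
      = e2 (Real.sqrt 3) 0
  apply e2_congr
  · rw [tc2]; ring
  · rw [ts2]; ring
lemma arc_d10 (σ : ℝ) (hσ : σ^2 = 1) :
    (arcC σ hσ).d1 0 = e2 (-(1/2)) (σ * (Real.sqrt 3/2)) := by
  show e2 (Real.sin (7*π/6 - 0)) (σ * (-Real.cos (7*π/6 - 0))) = _
  apply e2_congr <;> rw [sub_zero]
  · rw [ts1]
  · rw [tc1]; ring
lemma arc_d1L (σ : ℝ) (hσ : σ^2 = 1) :
    (arcC σ hσ).d1 (4*π/3) = e2 (-(1/2)) (-(σ * (Real.sqrt 3/2))) := by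
  show e2 (Real.sin (7*π/6 - 4*π/3)) (σ * (-Real.cos (7*π/6 - 4*π/3))) = _
  apply e2_congr
  · rw [ts2]
  · rw [tc2]; ring

noncomputable def curves : ∀ i : Fin 3, H2Curve 2 (![Real.sqrt 3, 4*π/3, 4*π/3] i) :=
  fun i => match i with
  | 0 => straightC
  | 1 => arcC 1 (by norm_num)
  | 2 => arcC (-1) (by norm_num)

lemma curves_f0 : ∀ i, (curves i).f 0 = e2 0 0 := by
  intro i
  fin_cases i
  · rfl
  · exact arc_f0 1 (by norm_num)
  · exact arc_f0 (-1) (by norm_num)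

lemma curves_fL : ∀ i, (curves i).f (![Real.sqrt 3, 4*π/3, 4*π/3] i) = e2 (Real.sqrt 3) 0 := by
  intro i
  fin_cases i
  · rfl
  · exact arc_fL 1 (by norm_num)
  · exact arc_fL (-1) (by norm_num)

lemma curves_d10_0 : (curves 0).d1 0 = e2 1 0 := rfl
lemma curves_d10_1 : (curves 1).d1 0 = e2 (-(1/2)) (1 * (Real.sqrt 3/2)) := arc_d10 1 (by norm_num)
lemma curves_d10_2 : (curves 2).d1 0 = e2 (-(1/2)) ((-1) * (Real.sqrt 3/2)) := arc_d10 (-1) (by norm_num)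
lemma curves_d1L_0 : (curves 0).d1 (![Real.sqrt 3, 4*π/3, 4*π/3] 0) = e2 1 0 := rfl
lemma curves_d1L_1 : (curves 1).d1 (![Real.sqrt 3, 4*π/3, 4*π/3] 1)
    = e2 (-(1/2)) (-(1 * (Real.sqrt 3/2))) := arc_d1L 1 (by norm_num)
lemma curves_d1L_2 : (curves 2).d1 (![Real.sqrt 3, 4*π/3, 4*π/3] 2)
    = e2 (-(1/2)) (-((-1) * (Real.sqrt 3/2))) := arc_d1L (-1) (by norm_num)

noncomputable def Net : ThetaNetwork 2 where
  L := ![Real.sqrt 3, 4*π/3, 4*π/3]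
  c := curves
  junc0 := fun i j => (curves_f0 i).trans (curves_f0 j).symm
  junc1 := fun i j => (curves_fL i).trans (curves_fL j).symm
  ang0 := by
    intro i j hij
    have h3 : Real.sqrt 3 * Real.sqrt 3 = 3 := Real.mul_self_sqrt (by norm_num)
    fin_cases i <;> fin_cases j <;>
      first
      | exact absurd rfl hij
      | exact (by rw [curves_d10_0, curves_d10_1, inner_e2]; norm_num :
          (inner ℝ ((curves 0).d1 0) ((curves 1).d1 0) : ℝ) = -(1/2))
      | exact (by rw [curves_d10_0, curves_d10_2, inner_e2]; norm_num :
          (inner ℝ ((curves 0).d1 0) ((curves 2).d1 0) : ℝ) = -(1/2))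
      | exact (by rw [curves_d10_1, curves_d10_0, inner_e2]; norm_num :
          (inner ℝ ((curves 1).d1 0) ((curves 0).d1 0) : ℝ) = -(1/2))
      | exact (by rw [curves_d10_2, curves_d10_0, inner_e2]; norm_num :
          (inner ℝ ((curves 2).d1 0) ((curves 0).d1 0) : ℝ) = -(1/2))
      | exact (by rw [curves_d10_1, curves_d10_2, inner_e2]; linarith [h3] :
          (inner ℝ ((curves 1).d1 0) ((curves 2).d1 0) : ℝ) = -(1/2))
      | exact (by rw [curves_d10_2, curves_d10_1, inner_e2]; linarith [h3] :
          (inner ℝ ((curves 2).d1 0) ((curves 1).d1 0) : ℝ) = -(1/2))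
  ang1 := by
    intro i j hij
    have h3 : Real.sqrt 3 * Real.sqrt 3 = 3 := Real.mul_self_sqrt (by norm_num)
    fin_cases i <;> fin_cases j <;>
      first
      | exact absurd rfl hij
      | exact (by rw [curves_d1L_0, curves_d1L_1, inner_e2]; norm_num :
          (inner ℝ ((curves 0).d1 (![Real.sqrt 3, 4*π/3, 4*π/3] 0)) ((curves 1).d1 (![Real.sqrt 3, 4*π/3, 4*π/3] 1)) : ℝ) = -(1/2))
      | exact (by rw [curves_d1L_0, curves_d1L_2, inner_e2]; norm_num :
          (inner ℝ ((curves 0).d1 (![Real.sqrt 3, 4*π/3, 4*π/3] 0)) ((curves 2).d1 (![Real.sqrt 3, 4*π/3, 4*π/3] 2)) : ℝ) = -(1/2))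
      | exact (by rw [curves_d1L_1, curves_d1L_0, inner_e2]; norm_num :
          (inner ℝ ((curves 1).d1 (![Real.sqrt 3, 4*π/3, 4*π/3] 1)) ((curves 0).d1 (![Real.sqrt 3, 4*π/3, 4*π/3] 0)) : ℝ) = -(1/2))
      | exact (by rw [curves_d1L_2, curves_d1L_0, inner_e2]; norm_num :
          (inner ℝ ((curves 2).d1 (![Real.sqrt 3, 4*π/3, 4*π/3] 2)) ((curves 0).d1 (![Real.sqrt 3, 4*π/3, 4*π/3] 0)) : ℝ) = -(1/2))
      | exact (by rw [curves_d1L_1, curves_d1L_2, inner_e2]; linarith [h3] :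
          (inner ℝ ((curves 1).d1 (![Real.sqrt 3, 4*π/3, 4*π/3] 1)) ((curves 2).d1 (![Real.sqrt 3, 4*π/3, 4*π/3] 2)) : ℝ) = -(1/2))
      | exact (by rw [curves_d1L_2, curves_d1L_1, inner_e2]; linarith [h3] :
          (inner ℝ ((curves 2).d1 (![Real.sqrt 3, 4*π/3, 4*π/3] 2)) ((curves 1).d1 (![Real.sqrt 3, 4*π/3, 4*π/3] 1)) : ℝ) = -(1/2))

lemma net_energy : Net.energy = Real.sqrt 3 + 16*π/3 := by
  have b0 : (Net.c 0).bend = 0 := straight_bend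
  have b1 : (Net.c 1).bend = 4*π/3 := arc_bend 1 (by norm_num)
  have b2 : (Net.c 2).bend = 4*π/3 := arc_bend (-1) (by norm_num)
  have l0 : Net.L 0 = Real.sqrt 3 := rfl
  have l1 : Net.L 1 = 4*π/3 := rfl
  have l2 : Net.L 2 = 4*π/3 := rfl
  rw [ThetaNetwork.energy, Fin.sum_univ_three, b0, b1, b2, l0, l1, l2]
  ring


lemma aux_pos {m : ℝ} (h0 : 0 ≤ m) (h1 : m < 1) (x : ℝ) : 0 < 1 - m * sin x ^ 2 := by
  nlinarith [sin_sq_le_one x, sq_nonneg (sin x)]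

lemma contE (m : ℝ) : Continuous fun x => Real.sqrt (1 - m * sin x ^ 2) := by
  apply Real.continuous_sqrt.comp; fun_prop

lemma contK {m : ℝ} (h0 : 0 ≤ m) (h1 : m < 1) :
    Continuous fun x => (Real.sqrt (1 - m * sin x ^ 2))⁻¹ := by
  apply (contE m).inv₀
  intro x
  exact (Real.sqrt_pos.2 (aux_pos h0 h1 x)).ne'

lemma ellK_mono {m₁ m₂ : ℝ} (h0 : 0 ≤ m₁) (h : m₁ ≤ m₂) (h1 : m₂ < 1) :
    ellK m₁ ≤ ellK m₂ := by
  apply intervalIntegral.integral_mono_on (by positivity)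
    ((contK h0 (lt_of_le_of_lt h h1)).intervalIntegrable _ _)
    ((contK (h0.trans h) h1).intervalIntegrable _ _)
  intro x _
  have p2 := aux_pos (h0.trans h) h1 x
  exact inv_anti₀ (Real.sqrt_pos.2 p2) (Real.sqrt_le_sqrt (by nlinarith [sq_nonneg (sin x)]))

lemma ellE_anti {m₁ m₂ : ℝ} (h0 : 0 ≤ m₁) (h : m₁ ≤ m₂) (h1 : m₂ < 1) :
    ellE m₂ ≤ ellE m₁ := by
  apply intervalIntegral.integral_mono_on (by positivity)
    ((contE m₂).intervalIntegrable _ _) ((contE m₁).intervalIntegrable _ _)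
  intro x _
  exact Real.sqrt_le_sqrt (by nlinarith [sq_nonneg (sin x)])

lemma w1 : ∫ x in (0:ℝ)..(π/2), sin x ^ 2 = π/4 := by
  rw [integral_sin_sq]; simp; ring

lemma w2 : ∫ x in (0:ℝ)..(π/2), sin x ^ 4 = 3*π/16 := by
  have h := integral_sin_pow (a := 0) (b := π/2) 2
  rw [w1] at h
  norm_num at h
  rw [h]; ring

lemma w3 : ∫ x in (0:ℝ)..(π/2), sin x ^ 6 = 5*π/32 := by
  have h := integral_sin_pow (a := 0) (b := π/2) 4
  rw [w2] at h
  norm_num at h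
  rw [h]; ring

lemma intPoly (c0 c1 c2 c3 : ℝ) :
    ∫ x in (0:ℝ)..(π/2), (c0 + c1 * sin x ^ 2 + c2 * (sin x ^ 2) ^ 2 + c3 * (sin x ^ 2) ^ 3)
      = c0*(π/2) + c1*(π/4) + c2*(3*π/16) + c3*(5*π/32) := by
  have e : ∀ x : ℝ, c0 + c1 * sin x ^ 2 + c2 * (sin x ^ 2) ^ 2 + c3 * (sin x ^ 2) ^ 3
      = c0 + c1 * sin x ^ 2 + c2 * sin x ^ 4 + c3 * sin x ^ 6 := fun x => by ring
  simp only [e]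
  have i0 : IntervalIntegrable (fun _ : ℝ => c0) volume 0 (π/2) := intervalIntegrable_const
  have i1 : IntervalIntegrable (fun x => c1 * sin x ^ 2) volume 0 (π/2) :=
    (by fun_prop : Continuous fun x => c1 * sin x ^ 2).intervalIntegrable _ _
  have i2 : IntervalIntegrable (fun x => c2 * sin x ^ 4) volume 0 (π/2) :=
    (by fun_prop : Continuous fun x => c2 * sin x ^ 4).intervalIntegrable _ _
  have i3 : IntervalIntegrable (fun x => c3 * sin x ^ 6) volume 0 (π/2) :=
    (by fun_prop : Continuous fun x => c3 * sin x ^ 6).intervalIntegrable _ _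
  rw [intervalIntegral.integral_add ((i0.add i1).add i2) i3,
      intervalIntegral.integral_add (i0.add i1) i2,
      intervalIntegral.integral_add i0 i1,
      intervalIntegral.integral_const,
      intervalIntegral.integral_const_mul, intervalIntegral.integral_const_mul,
      intervalIntegral.integral_const_mul, w1, w2, w3]
  simp [smul_eq_mul]; ring

lemma ptU {s : ℝ} (h0 : 0 ≤ s) (h1 : s ≤ 1) :
    (Real.sqrt (1 - 4/5*s))⁻¹ ≤ 126/125 + 506/625*s - 4154/3125*s^2 + 1096/625*s^3 := by
  have hu : (0:ℝ) < 1 - 4/5*s := by linarith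
  set P : ℝ := 126/125 + 506/625*s - 4154/3125*s^2 + 1096/625*s^3 with hP
  have hy0 : 0 < Real.sqrt (1 - 4/5*s) := Real.sqrt_pos.2 hu
  have hy2 : Real.sqrt (1 - 4/5*s) ^ 2 = 1 - 4/5*s := Real.sq_sqrt hu.le
  have hP0 : 0 ≤ P := by
    rw [hP]
    nlinarith [sq_nonneg (s-1/2), mul_nonneg h0 (sub_nonneg.2 h1), sq_nonneg s]
  have hz : 1 ≤ (P * Real.sqrt (1 - 4/5*s)) ^ 2 := by
    rw [mul_pow, hy2, hP]
    nlinarith [mul_nonneg (mul_nonneg h0 (sub_nonneg.2 h1)) (sq_nonneg (16*s-9)),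
      mul_nonneg h0 (sq_nonneg (16*s-9)), mul_nonneg (sub_nonneg.2 h1) (sq_nonneg (16*s-9)),
      sq_nonneg (16*s-9), mul_nonneg h0 (sub_nonneg.2 h1), sq_nonneg s, sq_nonneg (s-1),
      mul_nonneg (mul_nonneg h0 h0) (sub_nonneg.2 h1),
      mul_nonneg (mul_nonneg (mul_nonneg h0 h0) h0) (sub_nonneg.2 h1)]
  have hz2 : 1 ≤ P * Real.sqrt (1 - 4/5*s) := by
    nlinarith [mul_nonneg hP0 hy0.le]
  rw [inv_eq_one_div, div_le_iff₀ hy0]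
  linarith [hz2]

lemma ptE {s : ℝ} (h0 : 0 ≤ s) (h1 : s ≤ 1) :
    9973/10000 - 269/625*s + 641/15625*s^2 - 12736/78125*s^3 ≤ Real.sqrt (1 - 4/5*s) := by
  set Q : ℝ := 9973/10000 - 269/625*s + 641/15625*s^2 - 12736/78125*s^3 with hQ
  have hQ0 : 0 ≤ Q := by
    rw [hQ]
    nlinarith [mul_nonneg h0 (sub_nonneg.2 h1), sq_nonneg s, mul_nonneg (mul_nonneg h0 h0) h0]
  have h2 : Q ^ 2 ≤ 1 - 4/5*s := by
    rw [hQ]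
    nlinarith [mul_nonneg (mul_nonneg h0 (sub_nonneg.2 h1)) (sq_nonneg (16*s-9)),
      mul_nonneg h0 (sq_nonneg (16*s-9)), mul_nonneg (sub_nonneg.2 h1) (sq_nonneg (16*s-9)),
      sq_nonneg (16*s-9), mul_nonneg h0 (sub_nonneg.2 h1), sq_nonneg s, sq_nonneg (s-1),
      mul_nonneg (mul_nonneg h0 h0) (sub_nonneg.2 h1)]
  calc Q = Real.sqrt (Q ^ 2) := (Real.sqrt_sq hQ0).symm
  _ ≤ Real.sqrt (1 - 4/5*s) := Real.sqrt_le_sqrt h2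

lemma ptL {s : ℝ} (h0 : 0 ≤ s) (h1 : s ≤ 1) :
    1989/2000 + 201/500*s - 4889/3125*s^2 + 12/5*s^3 ≤ (Real.sqrt (1 - 4/5*s))⁻¹ := by
  have hu : (0:ℝ) < 1 - 4/5*s := by linarith
  set Q : ℝ := 1989/2000 + 201/500*s - 4889/3125*s^2 + 12/5*s^3 with hQ
  have hy0 : 0 < Real.sqrt (1 - 4/5*s) := Real.sqrt_pos.2 hu
  have hy2 : Real.sqrt (1 - 4/5*s) ^ 2 = 1 - 4/5*s := Real.sq_sqrt hu.le
  have hQ0 : 0 ≤ Q := by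
    rw [hQ]
    nlinarith [mul_nonneg h0 (sub_nonneg.2 h1), sq_nonneg (s-1/3), mul_nonneg (mul_nonneg h0 h0) h0]
  have hz : (Q * Real.sqrt (1 - 4/5*s)) ^ 2 ≤ 1 := by
    rw [mul_pow, hy2, hQ]
    nlinarith [mul_nonneg (mul_nonneg h0 (sub_nonneg.2 h1)) (sq_nonneg (s-1)),
      mul_nonneg (mul_nonneg h0 (sub_nonneg.2 h1)) (sq_nonneg s),
      mul_nonneg h0 (sq_nonneg (s-1)), mul_nonneg (sub_nonneg.2 h1) (sq_nonneg s),
      mul_nonneg (mul_nonneg h0 h0) (sub_nonneg.2 h1), sq_nonneg (s*(s-1)),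
      mul_nonneg (mul_nonneg (mul_nonneg h0 h0) h0) (sub_nonneg.2 h1),
      mul_nonneg h0 (sub_nonneg.2 h1), sq_nonneg s, sq_nonneg (s-1)]
  have hz2 : Q * Real.sqrt (1 - 4/5*s) ≤ 1 := by
    nlinarith [mul_nonneg hQ0 hy0.le]
  rw [inv_eq_one_div, le_div_iff₀ hy0]
  linarith [hz2]

lemma Kub : ellK (4/5) ≤ 126/125*(π/2) + 506/625*(π/4) - 4154/3125*(3*π/16) + 1096/625*(5*π/32) := by
  have h : ellK (4/5) ≤ ∫ x in (0:ℝ)..(π/2),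
      (126/125 + 506/625 * sin x ^ 2 + (-4154/3125) * (sin x ^ 2) ^ 2 + 1096/625 * (sin x ^ 2) ^ 3) := by
    apply intervalIntegral.integral_mono_on (by positivity)
      ((contK (by norm_num) (by norm_num)).intervalIntegrable _ _)
      ((by fun_prop : Continuous fun x => 126/125 + 506/625 * sin x ^ 2
        + (-4154/3125) * (sin x ^ 2) ^ 2 + 1096/625 * (sin x ^ 2) ^ 3).intervalIntegrable _ _)
    intro x _
    have := ptU (sq_nonneg (sin x)) (sin_sq_le_one x)
    have e : 1 - 4/5 * sin x ^ 2 = 1 - 4/5 * sin x ^ 2 := rfl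
    nlinarith [this]
  rw [intPoly] at h
  linarith

lemma Elb : 9973/10000*(π/2) - 269/625*(π/4) + 641/15625*(3*π/16) - 12736/78125*(5*π/32) ≤ ellE (4/5) := by
  have h : (∫ x in (0:ℝ)..(π/2),
      (9973/10000 + (-269/625) * sin x ^ 2 + (641/15625) * (sin x ^ 2) ^ 2 + (-12736/78125) * (sin x ^ 2) ^ 3))
      ≤ ellE (4/5) := by
    apply intervalIntegral.integral_mono_on (by positivity)
      ((by fun_prop : Continuous fun x => 9973/10000 + (-269/625) * sin x ^ 2
        + (641/15625) * (sin x ^ 2) ^ 2 + (-12736/78125) * (sin x ^ 2) ^ 3).intervalIntegrable _ _)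
      ((contE (4/5)).intervalIntegrable _ _)
    intro x _
    have := ptE (sq_nonneg (sin x)) (sin_sq_le_one x)
    nlinarith [this]
  rw [intPoly] at h
  linarith

lemma Klb : 1989/2000*(π/2) + 201/500*(π/4) - 4889/3125*(3*π/16) + 12/5*(5*π/32) ≤ ellK (4/5) := by
  have h : (∫ x in (0:ℝ)..(π/2),
      (1989/2000 + (201/500) * sin x ^ 2 + (-4889/3125) * (sin x ^ 2) ^ 2 + (12/5) * (sin x ^ 2) ^ 3))
      ≤ ellK (4/5) := by
    apply intervalIntegral.integral_mono_on (by positivity)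
      ((by fun_prop : Continuous fun x => 1989/2000 + (201/500) * sin x ^ 2
        + (-4889/3125) * (sin x ^ 2) ^ 2 + (12/5) * (sin x ^ 2) ^ 3).intervalIntegrable _ _)
      ((contK (by norm_num) (by norm_num)).intervalIntegrable _ _)
    intro x _
    have := ptL (sq_nonneg (sin x)) (sin_sq_le_one x)
    nlinarith [this]
  rw [intPoly] at h
  linarith


end Aux

/-- There is a planar `Θ`-network with energy strictly below `4√ϖ*`. -/
theorem exists_good_planar_theta_network (m : ℝ) (hm : m ∈ Set.Ioo (0:ℝ) 1) (hKE : ellK m = 2 * ellE m) :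
    ∃ Γ : ThetaNetwork 2, Γ.energy < 4 * Real.sqrt (32 * (2 * m - 1) * ellE m ^ 2) := by
  refine ⟨Net, ?_⟩
  rw [net_energy]
  obtain ⟨hm0, hm1⟩ := hm
  have h45 : 4/5 < m := by
    by_contra hcon
    push_neg at hcon
    have hK : ellK m ≤ ellK (4/5) := ellK_mono hm0.le hcon (by norm_num)
    have hE : ellE (4/5) ≤ ellE m := ellE_anti hm0.le hcon (by norm_num)
    linarith [Kub, Elb, Real.pi_pos]
  have hKm : ellK (4/5) ≤ ellK m := ellK_mono (by norm_num) h45.le hm1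
  have hElb : (67941/200000)*π ≤ ellE m := by linarith [Klb]
  have hEpos : 0 < ellE m := lt_of_lt_of_le (by positivity) hElb
  have h2m : (3:ℝ)/5 < 2*m - 1 := by linarith
  have hs3 : Real.sqrt 3 ^ 2 = 3 := Real.sq_sqrt (by norm_num)
  have hs3' : Real.sqrt 3 < 1.7320509 := by
    rw [show (1.7320509:ℝ) = Real.sqrt (1.7320509^2) from (Real.sqrt_sq (by norm_num)).symm]
    exact Real.sqrt_lt_sqrt (by norm_num) (by norm_num)
  have hs3p : 0 < Real.sqrt 3 := by positivity
  have hπ0 : 3.141592 < π := Real.pi_gt_d6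
  have hπ1 : π < 3.141593 := Real.pi_lt_d6
  have hE2 : ((67941/200000)*π)^2 ≤ ellE m ^ 2 := by
    apply pow_le_pow_left₀ (by positivity) hElb
  have hX : ((Real.sqrt 3 + 16*π/3)/4)^2 < 32*(2*m-1)*ellE m^2 := by
    have key : 32*(3/5)*(((67941/200000)*π)^2) ≤ 32*(2*m-1)*ellE m^2 := by
      nlinarith [hE2, h2m, hEpos, sq_nonneg ((67941/200000)*π), mul_pos hEpos hEpos]
    nlinarith [key, hs3, hs3', hπ0, hπ1, hs3p, mul_pos hs3p Real.pi_pos,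
      mul_lt_mul'' hs3' hπ1 hs3p.le Real.pi_pos.le, sq_nonneg (π - 3.141592)]
  have h6 : (Real.sqrt 3 + 16*π/3)/4 < Real.sqrt (32*(2*m-1)*ellE m^2) := by
    rw [show (Real.sqrt 3 + 16*π/3)/4 = Real.sqrt (((Real.sqrt 3 + 16*π/3)/4)^2) from
      (Real.sqrt_sq (by positivity)).symm]
    exact Real.sqrt_lt_sqrt (by positivity) hX
  linarith
end
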